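/- arXiv:2305.09190 — 6 statements merged into one kernel-verified Lean document; each statement's English description precedes it below -/
import Mathlib

section
/- Let M be a matching in a finite simple graph G. If the subgraph of G induced by the vertices covered by M contains no closed walk that alternates between edges of M and edges not in M, then M is a positive matching, i.e., there exists a weight function w : V(G) → ℝ such that w(i)+w(j) > 0 for every edge {i,j} ∈ M and w(i)+w(j) < 0 for every edge {i,j} ∈ E(G) \ M. Conversely, if M is a positive matching then no such alternating closed walk exists. -/
/-- A set of edges is a matching: the edges are pairwise vertex-disjoint. -/
def EdgesDisjoint {V : Type*} (M : Set (Sym2 V)) : Prop :=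
  ∀ e ∈ M, ∀ e' ∈ M, e ≠ e' → ∀ v : V, ¬(v ∈ e ∧ v ∈ e')

/-- `M` is a positive matching of the graph with edge set `E'`: it is a matching
contained in `E'` admitting a weight function `w` whose edge sums are positive on `M`
and negative on `E' \ M`. -/
def IsPositiveMatchingOn {V : Type*} (E' M : Set (Sym2 V)) : Prop :=
  M ⊆ E' ∧ EdgesDisjoint M ∧
  ∃ w : V → ℝ, ∀ i j : V, s(i, j) ∈ E' →
    (s(i, j) ∈ M → 0 < w i + w j) ∧ (s(i, j) ∉ M → w i + w j < 0)

/-- `M : Fin p → Set (Sym2 V)` is a positive matching decomposition of `G`: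
a partition of the edge set into pairwise disjoint parts such that each `M ℓ`
is a positive matching of `(V, E(G) \ (M₀ ∪ ⋯ ∪ M_{ℓ-1}))`. -/
def IsPMDecomp {V : Type*} (G : SimpleGraph V) (p : ℕ) (M : Fin p → Set (Sym2 V)) : Prop :=
  (∀ ℓ, M ℓ ⊆ G.edgeSet) ∧
  (∀ e ∈ G.edgeSet, ∃! ℓ, e ∈ M ℓ) ∧
  (∀ ℓ : Fin p, IsPositiveMatchingOn (G.edgeSet \ ⋃ ℓ' ∈ {ℓ' | ℓ' < ℓ}, M ℓ') (M ℓ))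

/-- The positive matching decomposition number of `G`. -/
noncomputable def pmd {V : Type*} (G : SimpleGraph V) : ℕ :=
  sInf {p | ∃ M : Fin p → Set (Sym2 V), IsPMDecomp G p M}

/-- An alternating closed walk of `G` with respect to `M`, lying in the subgraph of `G`
induced by the vertices covered by `M`: a closed walk of even positive length whose
edges alternate between `M` and its complement. -/
def HasAlternatingClosedWalk {V : Type*} (G : SimpleGraph V) (M : Set (Sym2 V)) : Prop :=
  ∃ (n : ℕ) (_ : 0 < n) (v : ZMod (2 * n) → V),
    (∀ i, G.Adj (v i) (v (i + 1))) ∧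
    (∀ i, ∃ e ∈ M, v i ∈ e) ∧
    (∀ i : ZMod (2 * n), s(v i, v (i + 1)) ∈ M ↔ i.val % 2 = 0)

private lemma chain_of_transGen {α : Type*} {R : α → α → Prop} {a b : α}
    (h : Relation.TransGen R a b) :
    ∃ (k : ℕ) (f : ℕ → α), f 0 = a ∧ f (k + 1) = b ∧ ∀ i ≤ k, R (f i) (f (i + 1)) := by
  induction h with
  | @single b hab =>
    refine ⟨0, fun i => if i = 0 then a else b, by simp, by simp, ?_⟩
    intro i hi
    have : i = 0 := by omega
    subst this
    simpa using hab
  | @tail b c hab hbc ih =>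
    obtain ⟨k, f, h0, hk, hstep⟩ := ih
    refine ⟨k + 1, fun i => if i = k + 2 then c else f i, ?_, ?_, ?_⟩
    · simp only [if_neg (by omega : ¬ (0 = k + 2))]; exact h0
    · simp
    · intro i hi
      rcases eq_or_lt_of_le hi with rfl | hlt
      · simp only [if_neg (by omega : ¬ (k + 1 = k + 2)), if_pos rfl]
        rw [hk]; exact hbc
      · have hik : i ≤ k := by omega
        simp only [if_neg (by omega : ¬ (i = k + 2)), if_neg (by omega : ¬ (i + 1 = k + 2))]
        exact hstep i hik

private lemma cycle_of_transGen {α : Type*} {R : α → α → Prop} {a : α}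
    (h : Relation.TransGen R a a) :
    ∃ (n : ℕ), 0 < n ∧ ∃ uu : ℕ → α, (∀ t, R (uu t) (uu (t + 1))) ∧ ∀ t, uu (t + n) = uu t := by
  obtain ⟨k, f, h0, hk, hstep⟩ := chain_of_transGen h
  refine ⟨k + 1, Nat.succ_pos k, fun t => f (t % (k + 1)), ?_, ?_⟩
  · intro t
    have hlt : t % (k + 1) < k + 1 := Nat.mod_lt _ (Nat.succ_pos k)
    have key : (t + 1) % (k + 1) = (t % (k + 1) + 1) % (k + 1) := (Nat.mod_add_mod t (k + 1) 1).symm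
    show R (f (t % (k + 1))) (f ((t + 1) % (k + 1)))
    rcases eq_or_lt_of_le (Nat.le_of_lt_succ hlt) with hj | hj
    · have h2 : (t + 1) % (k + 1) = 0 := by rw [key, hj, Nat.mod_self]
      rw [h2, hj, h0, ← hk]
      exact hstep k le_rfl
    · have h2 : (t + 1) % (k + 1) = t % (k + 1) + 1 := by
        rw [key]; exact Nat.mod_eq_of_lt (by omega)
      rw [h2]
      exact hstep _ (by omega)
  · intro t
    simp [Nat.add_mod_right]

private lemma exists_rank {V : Type*} [Fintype V] (R : V → V → Prop)
    (hacyc : ∀ a, ¬ Relation.TransGen R a a) :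
    ∃ r : V → ℕ, (∀ x, r x ≤ Fintype.card V) ∧ ∀ u v, R u v → r u < r v := by
  classical
  refine ⟨fun x => (Finset.univ.filter fun u => Relation.TransGen R u x).card, ?_, ?_⟩
  · intro x
    exact (Finset.card_filter_le _ _).trans (le_of_eq Finset.card_univ)
  · intro u v huv
    apply Finset.card_lt_card
    have hsub : (Finset.univ.filter fun x => Relation.TransGen R x u) ⊆
        (Finset.univ.filter fun x => Relation.TransGen R x v) := by
      intro x hx
      simp only [Finset.mem_filter, Finset.mem_univ, true_and] at hx ⊢
      exact hx.tail huv
    refine (Finset.ssubset_iff_of_subset hsub).mpr ⟨u, ?_, ?_⟩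
    · simp [Relation.TransGen.single huv]
    · simp [hacyc u]

/-- A matching `M` in a finite simple graph `G` is a positive matching
if and only if the subgraph of `G` induced by `M` has no alternating closed walks
with respect to `M`. -/
theorem positiveMatching_iff_no_alternatingClosedWalk {V : Type*} [Fintype V]
    (G : SimpleGraph V) (M : Set (Sym2 V)) (hM : M ⊆ G.edgeSet)
    (hdisj : EdgesDisjoint M) :
    (∃ w : V → ℝ, ∀ i j : V, s(i, j) ∈ G.edgeSet →
        (s(i, j) ∈ M → 0 < w i + w j) ∧ (s(i, j) ∉ M → w i + w j < 0))
      ↔ ¬ HasAlternatingClosedWalk G M := by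
  classical
  constructor
  · rintro ⟨w, hw⟩ ⟨n, hn, v, hadj, hcov, halt⟩
    haveI : NeZero (2 * n) := ⟨by omega⟩
    haveI : Fact (1 < 2 * n) := ⟨by omega⟩
    classical
    set ε : ZMod (2 * n) → ℝ := fun i => if i.val % 2 = 0 then (1:ℝ) else -1 with hε
    have hpos : ∀ i : ZMod (2 * n), 0 < ε i * (w (v i) + w (v (i + 1))) := by
      intro i
      have hedge : s(v i, v (i + 1)) ∈ G.edgeSet := (SimpleGraph.mem_edgeSet G).mpr (hadj i)
      obtain ⟨h1, h2⟩ := hw (v i) (v (i + 1)) hedge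
      by_cases hp : i.val % 2 = 0
      · have := h1 ((halt i).mpr hp)
        simp only [hε, if_pos hp]
        linarith
      · have hnotM : s(v i, v (i + 1)) ∉ M := fun hmem => hp ((halt i).mp hmem)
        have := h2 hnotM
        simp only [hε, if_neg hp]
        nlinarith
    have hflip : ∀ i : ZMod (2 * n), ε (i + 1) = -ε i := by
      intro i
      have hval : (i + 1).val % 2 = (i.val + 1) % 2 := by
        rw [ZMod.val_add, ZMod.val_one, Nat.mod_mod_of_dvd _ ⟨n, rfl⟩]
      simp only [hε]
      by_cases hp : i.val % 2 = 0
      · rw [if_pos hp, if_neg (by omega : ¬ ((i + 1).val % 2 = 0))]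
      · rw [if_neg hp, if_pos (by omega : (i + 1).val % 2 = 0)]
        norm_num
    have hzero : ∑ i : ZMod (2 * n), ε i * (w (v i) + w (v (i + 1))) = 0 := by
      have h2 : ∑ i : ZMod (2 * n), ε i * w (v (i + 1)) =
          ∑ i : ZMod (2 * n), -(ε i * w (v i)) := by
        refine Fintype.sum_equiv (Equiv.addRight (1 : ZMod (2 * n))) _ _ ?_
        intro i
        simp only [Equiv.coe_addRight]
        rw [hflip i]
        ring
      calc ∑ i : ZMod (2 * n), ε i * (w (v i) + w (v (i + 1)))
          = ∑ i : ZMod (2 * n), (ε i * w (v i) + ε i * w (v (i + 1))) := by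
            apply Finset.sum_congr rfl; intros; ring
        _ = (∑ i : ZMod (2 * n), ε i * w (v i)) + ∑ i : ZMod (2 * n), ε i * w (v (i + 1)) :=
            Finset.sum_add_distrib
        _ = (∑ i : ZMod (2 * n), ε i * w (v i)) + ∑ i : ZMod (2 * n), -(ε i * w (v i)) := by
            rw [h2]
        _ = 0 := by rw [← Finset.sum_add_distrib]; simp
    have hgt : 0 < ∑ i : ZMod (2 * n), ε i * (w (v i) + w (v (i + 1))) :=
      Finset.sum_pos (fun i _ => hpos i) ⟨0, Finset.mem_univ 0⟩
    rw [hzero] at hgt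
    exact lt_irrefl 0 hgt
  · intro hnw
    -- partner function
    have hm' : ∀ x : V, ∃ y : V, (∃ z, s(x, z) ∈ M) → s(x, y) ∈ M := by
      intro x
      by_cases hx : ∃ z, s(x, z) ∈ M
      · obtain ⟨z, hz⟩ := hx; exact ⟨z, fun _ => hz⟩
      · exact ⟨x, fun h => absurd h hx⟩
    choose m hmM using hm'
    -- uniqueness of partners
    have huniq : ∀ x y z : V, s(x, y) ∈ M → s(x, z) ∈ M → y = z := by
      intro x y z hy hz
      by_cases he : s(x, y) = s(x, z)
      · exact Sym2.congr_right.mp he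
      · exact absurd ⟨Sym2.mem_mk_left x y, Sym2.mem_mk_left x z⟩
          (hdisj _ hy _ hz he x)
    have hmx : ∀ x y : V, s(x, y) ∈ M → m x = y := fun x y h =>
      huniq x (m x) y (hmM x ⟨y, h⟩) h
    have hCm : ∀ x : V, (∃ z, s(x, z) ∈ M) → (∃ z, s(m x, z) ∈ M) := by
      intro x hx
      exact ⟨x, by rw [Sym2.eq_swap]; exact hmM x hx⟩
    have hmm : ∀ x : V, (∃ z, s(x, z) ∈ M) → m (m x) = x := by
      intro x hx
      exact hmx (m x) x (by rw [Sym2.eq_swap]; exact hmM x hx)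
    -- the auxiliary relation
    set R : V → V → Prop := fun u v =>
      (∃ z, s(u, z) ∈ M) ∧ (∃ z, s(v, z) ∈ M) ∧ s(u, m v) ∈ G.edgeSet ∧ s(u, m v) ∉ M with hR
    -- acyclicity: a cycle in R yields an alternating closed walk
    have hacyc : ∀ a, ¬ Relation.TransGen R a a := by
      intro a ha
      obtain ⟨n, hn0, uu, hstep, hper⟩ := cycle_of_transGen ha
      have hcovu : ∀ t, ∃ z, s(uu t, z) ∈ M := fun t => (hstep t).1
      set g : ℕ → V := fun t => if t % 2 = 0 then m (uu (t / 2)) else uu (t / 2) with hg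
      have hgper : Function.Periodic g (2 * n) := by
        intro t
        have h1 : (t + 2 * n) % 2 = t % 2 := by omega
        have h2 : (t + 2 * n) / 2 = t / 2 + n := by omega
        simp only [hg, h1, h2, hper (t / 2)]
      haveI : NeZero (2 * n) := ⟨by omega⟩
      haveI : Fact (1 < 2 * n) := ⟨by omega⟩
      set v : ZMod (2 * n) → V := fun i => g i.val with hv
      have hv1 : ∀ i : ZMod (2 * n), v (i + 1) = g (i.val + 1) := by
        intro i
        show g ((i + 1).val) = g (i.val + 1)
        rw [ZMod.val_add, ZMod.val_one]
        exact hgper.map_mod_nat (i.val + 1)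
      -- the two shapes of v
      have hveven : ∀ i : ZMod (2 * n), i.val % 2 = 0 →
          v i = m (uu (i.val / 2)) ∧ v (i + 1) = uu (i.val / 2) := by
        intro i hp
        constructor
        · show g i.val = _
          simp only [hg, if_pos hp]
        · rw [hv1 i]
          have h1 : ¬ ((i.val + 1) % 2 = 0) := by omega
          have h2 : (i.val + 1) / 2 = i.val / 2 := by omega
          simp only [hg, if_neg h1, h2]
      have hvodd : ∀ i : ZMod (2 * n), i.val % 2 = 1 →
          v i = uu (i.val / 2) ∧ v (i + 1) = m (uu (i.val / 2 + 1)) := by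
        intro i hp
        constructor
        · show g i.val = _
          simp only [hg, hp]
          norm_num
        · rw [hv1 i]
          have h1 : (i.val + 1) % 2 = 0 := by omega
          have h2 : (i.val + 1) / 2 = i.val / 2 + 1 := by omega
          simp only [hg, if_pos h1, h2]
      apply hnw
      refine ⟨n, hn0, v, ?_, ?_, ?_⟩
      · intro i
        rcases Nat.mod_two_eq_zero_or_one i.val with hp | hp
        · obtain ⟨e1, e2⟩ := hveven i hp
          rw [e1, e2]
          exact ((SimpleGraph.mem_edgeSet G).mp (hM (hmM _ (hcovu _)))).symm
        · obtain ⟨e1, e2⟩ := hvodd i hp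
          rw [e1, e2]
          exact (SimpleGraph.mem_edgeSet G).mp (hstep (i.val / 2)).2.2.1
      · intro i
        rcases Nat.mod_two_eq_zero_or_one i.val with hp | hp
        · obtain ⟨e1, _⟩ := hveven i hp
          rw [e1]
          refine ⟨s(m (uu (i.val / 2)), m (m (uu (i.val / 2)))), ?_, Sym2.mem_mk_left _ _⟩
          exact hmM _ (hCm _ (hcovu _))
        · obtain ⟨e1, _⟩ := hvodd i hp
          rw [e1]
          exact ⟨s(uu (i.val / 2), m (uu (i.val / 2))), hmM _ (hcovu _), Sym2.mem_mk_left _ _⟩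
      · intro i
        rcases Nat.mod_two_eq_zero_or_one i.val with hp | hp
        · obtain ⟨e1, e2⟩ := hveven i hp
          rw [e1, e2, Sym2.eq_swap]
          exact iff_of_true (hmM _ (hcovu _)) hp
        · obtain ⟨e1, e2⟩ := hvodd i hp
          rw [e1, e2]
          have : s(uu (i.val / 2), m (uu (i.val / 2 + 1))) ∉ M := (hstep (i.val / 2)).2.2.2
          exact iff_of_false this (by omega)
    -- rank function
    obtain ⟨r, hrK, hrlt⟩ := exists_rank R hacyc
    set K := Fintype.card V with hK
    set A : ℝ := 1 / 3 with hA
    have hA0 : (0:ℝ) ≤ A := by norm_num [hA]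
    have hA1 : A ≤ 1 := by norm_num [hA]
    have hApow_pos : ∀ t : ℕ, (0:ℝ) < A ^ t := fun t => pow_pos (by norm_num [hA]) t
    have hApow_le1 : ∀ t : ℕ, A ^ t ≤ 1 := fun t => pow_le_one₀ hA0 hA1
    set w : V → ℝ := fun x =>
      if ∃ z, s(x, z) ∈ M then A ^ (r (m x)) - A ^ (r x) + A ^ (K + 1) else -4 with hw
    have hwle : ∀ x, w x ≤ 2 := by
      intro x
      simp only [hw]
      split_ifs with h
      · have := hApow_le1 (r (m x))
        have := hApow_le1 (K + 1)
        have := hApow_pos (r x)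
        linarith
      · norm_num
    refine ⟨w, ?_⟩
    intro i j hij
    constructor
    · intro hmem
      have hci : ∃ z, s(i, z) ∈ M := ⟨j, hmem⟩
      have hcj : ∃ z, s(j, z) ∈ M := ⟨i, by rwa [Sym2.eq_swap]⟩
      have hmi : m i = j := hmx i j hmem
      have hmj : m j = i := hmx j i (by rwa [Sym2.eq_swap])
      simp only [hw, if_pos hci, if_pos hcj, hmi, hmj]
      have := hApow_pos (K + 1)
      linarith
    · intro hmem
      by_cases hci : ∃ z, s(i, z) ∈ M
      · by_cases hcj : ∃ z, s(j, z) ∈ M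
        · -- both covered
          have hRi : R i (m j) := by
            refine ⟨hci, hCm j hcj, ?_, ?_⟩
            · rw [hmm j hcj]; exact hij
            · rw [hmm j hcj]; exact hmem
          have hRj : R j (m i) := by
            refine ⟨hcj, hCm i hci, ?_, ?_⟩
            · rw [hmm i hci, Sym2.eq_swap]; exact hij
            · rw [hmm i hci, Sym2.eq_swap]; exact hmem
          have h1 : r i < r (m j) := hrlt _ _ hRi
          have h2 : r j < r (m i) := hrlt _ _ hRj
          have e1 : A ^ (r (m j)) ≤ A ^ (r i) * A :=
            le_of_le_of_eq (pow_le_pow_of_le_one hA0 hA1 h1) (pow_succ A (r i))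
          have e2 : A ^ (r (m i)) ≤ A ^ (r j) * A :=
            le_of_le_of_eq (pow_le_pow_of_le_one hA0 hA1 h2) (pow_succ A (r j))
          have e3 : A ^ (K + 1) ≤ A ^ (r i) * A :=
            le_of_le_of_eq (pow_le_pow_of_le_one hA0 hA1 (by have := hrK i; omega : r i + 1 ≤ K + 1))
              (pow_succ A (r i))
          have hpi := hApow_pos (r i)
          have hpj := hApow_pos (r j)
          simp only [hw, if_pos hci, if_pos hcj]
          rw [hA] at *
          nlinarith [hrK i, hrK j]
        · have hwj : w j = -4 := by simp only [hw, if_neg hcj]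
          have := hwle i
          rw [hwj]; linarith
      · have hwi : w i = -4 := by simp only [hw, if_neg hci]
        have := hwle j
        rw [hwi]; linarith
end

section
/- If G is a forest, then pmd(G) = Δ(G): the positive matching decomposition number of a forest equals its maximal vertex degree. -/
/-!
Each part of a positive matching decomposition is a matching, so the edges at a vertex lie in
distinct parts and `Δ(G) ≤ pmd G` for every graph. Conversely, in a forest every function on
edges has the form `s(i, j) ↦ w i + w j` (peel off a pendant edge and solve for the weight of its
leaf), so every matching `M` inside a subforest is positive: realise `1` on `M` and `-1`
elsewhere. The line graph of a forest is `Δ(G)`-colourable (greedily, adding pendant edges one at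
a time: a new edge meets at most `Δ(G) - 1` earlier ones), and its colour classes, in any order,
form a positive matching decomposition with `Δ(G)` parts.
-/

namespace SimpleGraph

variable {V : Type*} {G : SimpleGraph V}

theorem IsAcyclic.exists_adj_forall_adj_eq [Finite G.edgeSet] (hG : G.IsAcyclic) {a b : V}
    (hab : G.Adj a b) : ∃ u y, G.Adj u y ∧ ∀ x, G.Adj u x → x = y := by
  have : Nonempty V := ⟨a⟩
  obtain ⟨u, v, p, hp, hmax⟩ := Walk.exists_isPath_forall_isPath_length_le_length G
  have hnil : ¬p.Nil := fun hnil => by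
    simpa [Walk.length_eq_zero_iff.2 hnil] using hmax a b _ (Path.singleton hab).2
  refine ⟨u, p.snd, p.adj_snd hnil, fun x hx => hG.eq_snd_of_adj_start hp hx ?_⟩
  by_contra hx'
  simpa using hmax _ _ _ (hp.cons hx' (h := hx.symm))

theorem IsAcyclic.induction_on_pendant_edge [Finite V] {P : SimpleGraph V → Prop} (bot : P ⊥)
    (pendant : ∀ (G : SimpleGraph V) (u y : V), G.Adj u y → (∀ x, G.Adj u x → x = y) →
      P (G.deleteEdges {s(u, y)}) → P G)
    (hG : G.IsAcyclic) : P G := by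
  induction hn : G.edgeSet.ncard using Nat.strong_induction_on generalizing G with
  | _ n ih =>
  obtain rfl | hne := eq_or_ne G ⊥
  · exact bot
  obtain ⟨a, b, hab⟩ := ne_bot_iff_exists_adj.1 hne
  obtain ⟨u, y, huy, hleaf⟩ := hG.exists_adj_forall_adj_eq hab
  refine pendant G u y huy hleaf (ih _ ?_ (hG.anti (G.deleteEdges_le _)) rfl)
  rw [← hn, edgeSet_deleteEdges]
  exact Set.ncard_sdiff_singleton_lt_of_mem huy (Set.toFinite _)

theorem IsAcyclic.exists_add_eq [Finite V] {R : Type*} [AddCommGroup R] (hG : G.IsAcyclic)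
    (t : Sym2 V → R) : ∃ w : V → R, ∀ ⦃i j⦄, G.Adj i j → w i + w j = t s(i, j) := by
  classical
  refine hG.induction_on_pendant_edge
    (P := fun G => ∃ w : V → R, ∀ ⦃i j⦄, G.Adj i j → w i + w j = t s(i, j))
    ⟨0, fun _ _ h => h.elim⟩ ?_
  rintro G u y huy hleaf ⟨w, hw⟩
  refine ⟨Function.update w u (t s(u, y) - w y), fun i j hij => ?_⟩
  by_cases hi : i = u
  · obtain rfl := hi
    obtain rfl := hleaf j hij
    simp [huy.ne']
  by_cases hj : j = u
  · obtain rfl := hj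
    obtain rfl := hleaf i hij.symm
    simp [huy.ne', Sym2.eq_swap]
  have hij' : (G.deleteEdges {s(u, y)}).Adj i j := by
    simp [hij, hi, hj]
  simp [hi, hj, hw hij']

theorem eq_of_mem_edgeSet_of_forall_adj_eq {u y : V} (hleaf : ∀ x, G.Adj u x → x = y)
    {e : Sym2 V} (he : e ∈ G.edgeSet) (hu : u ∈ e) : e = s(u, y) := by
  obtain ⟨x, rfl⟩ := Sym2.mem_iff_exists.1 hu
  rw [hleaf x he]

theorem lineGraph_colorable_of_deleteEdges_pendant [Finite V] {u y : V} {c : ℕ}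
    (huy : G.Adj u y) (hleaf : ∀ x, G.Adj u x → x = y) (hc : (G.incidenceSet y).ncard ≤ c)
    (hC : (G.deleteEdges {s(u, y)}).lineGraph.Colorable c) : G.lineGraph.Colorable c := by
  classical
  set e₀ := s(u, y)
  obtain ⟨C'⟩ := hC
  set used := C' '' {e | y ∈ (e : Sym2 V)}
  have hused : used.ncard < c := calc
    used.ncard ≤ {e : (G.deleteEdges {e₀}).edgeSet | y ∈ (e : Sym2 V)}.ncard :=
      Set.ncard_image_le (Set.toFinite _)
    _ ≤ (G.incidenceSet y \ {e₀}).ncard := by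
      refine Set.ncard_le_ncard_of_injOn Subtype.val ?_ Subtype.val_injective.injOn
        (Set.toFinite _)
      rintro ⟨e, he⟩ hy
      rw [edgeSet_deleteEdges] at he
      exact ⟨⟨he.1, hy⟩, he.2⟩
    _ < (G.incidenceSet y).ncard :=
      Set.ncard_sdiff_singleton_lt_of_mem ⟨huy, Sym2.mem_mk_right u y⟩ (Set.toFinite _)
    _ ≤ c := hc
  obtain ⟨m, hm⟩ : ∃ m, m ∉ used := by
    by_contra! h
    rw [Set.eq_univ_of_forall h, Set.ncard_univ, Nat.card_fin] at hused
    exact hused.false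
  have hmem : ∀ e ∈ G.edgeSet, e ≠ e₀ → e ∈ (G.deleteEdges {e₀}).edgeSet :=
    fun e he hne => G.edgeSet_deleteEdges _ ▸ ⟨he, hne⟩
  -- An edge meeting the pendant edge `e₀` meets it at `y`, where the colour `m` is free.
  have hm_ne : ∀ (e : G.edgeSet) (hne : e.1 ≠ e₀), (∃ v ∈ e₀, v ∈ e.1) →
      m ≠ C' ⟨e, hmem e e.2 hne⟩ := by
    rintro ⟨e, he⟩ hne ⟨v, hv, hve⟩ hme
    rcases Sym2.mem_iff.1 hv with rfl | rfl
    · exact hne (eq_of_mem_edgeSet_of_forall_adj_eq hleaf he hve)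
    · exact hm ⟨_, hve, hme.symm⟩
  refine ⟨Coloring.mk (fun e => if h : e.1 = e₀ then m else C' ⟨e, hmem e e.2 h⟩) ?_⟩
  rintro e₁ e₂ hadj
  obtain ⟨hne, v, hv₁, hv₂⟩ := lineGraph_adj_iff_exists.1 hadj
  by_cases h₁ : e₁.1 = e₀ <;> by_cases h₂ : e₂.1 = e₀ <;>
    simp only [h₁, h₂, dite_true, dite_false]
  · exact absurd (Subtype.ext (h₁.trans h₂.symm)) hne
  · exact hm_ne e₂ h₂ ⟨v, h₁ ▸ hv₁, hv₂⟩
  · exact (hm_ne e₁ h₁ ⟨v, h₂ ▸ hv₂, hv₁⟩).symm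
  · exact C'.valid <| lineGraph_adj_iff_exists.2
      ⟨fun h => hne (Subtype.ext (Subtype.mk.inj h)), v, hv₁, hv₂⟩

theorem IsAcyclic.lineGraph_colorable [Finite V] (hG : G.IsAcyclic) {c : ℕ}
    (hc : ∀ v, (G.incidenceSet v).ncard ≤ c) : G.lineGraph.Colorable c := by
  refine hG.induction_on_pendant_edge
    (P := fun G => (∀ v, (G.incidenceSet v).ncard ≤ c) → G.lineGraph.Colorable c)
    (fun _ => have : IsEmpty (⊥ : SimpleGraph V).edgeSet := by simp
      .of_isEmpty c) ?_ hc
  intro G u y huy hleaf ih hc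
  refine lineGraph_colorable_of_deleteEdges_pendant huy hleaf (hc y) (ih fun v => ?_)
  refine (Set.ncard_le_ncard (fun e he => ?_)).trans (hc v)
  exact ⟨(G.edgeSet_deleteEdges _ ▸ he.1).1, he.2⟩

theorem IsAcyclic.lineGraph_colorable_maxDegree [Fintype V] [DecidableRel G.Adj]
    (hG : G.IsAcyclic) : G.lineGraph.Colorable G.maxDegree := by
  classical
  refine hG.lineGraph_colorable fun v => ?_
  rw [← Nat.card_coe_set_eq, Nat.card_eq_fintype_card, card_incidenceSet_eq_degree]
  exact G.degree_le_maxDegree v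

theorem IsAcyclic.isPositiveMatchingOn [Finite V] (hG : G.IsAcyclic)
    {E' M : Set (Sym2 V)} (hE' : E' ⊆ G.edgeSet) (hME' : M ⊆ E') (hM : EdgesDisjoint M) :
    IsPositiveMatchingOn E' M := by
  classical
  obtain ⟨w, hw⟩ := hG.exists_add_eq fun e => if e ∈ M then (1 : ℝ) else -1
  refine ⟨hME', hM, w, fun i j hij => ?_⟩
  rw [hw (hE' hij)]
  constructor <;> intro h <;> simp [h]

theorem Coloring.edgesDisjoint_image_colorClass {α : Type*}
    (C : G.lineGraph.Coloring α) (a : α) : EdgesDisjoint (Subtype.val '' C.colorClass a) := by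
  rintro _ ⟨e₁, h₁, rfl⟩ _ ⟨e₂, h₂, rfl⟩ hne v ⟨hv₁, hv₂⟩
  exact C.valid (lineGraph_adj_iff_exists.2 ⟨fun h => hne (congrArg _ h), v, hv₁, hv₂⟩)
    (h₁.trans h₂.symm)

theorem IsAcyclic.isPMDecomp_colorClass [Finite V] (hG : G.IsAcyclic) {p : ℕ}
    (C : G.lineGraph.Coloring (Fin p)) :
    IsPMDecomp G p fun ℓ => Subtype.val '' C.colorClass ℓ := by
  have mem_iff : ∀ e (he : e ∈ G.edgeSet) ℓ,
      e ∈ Subtype.val '' C.colorClass ℓ ↔ C ⟨e, he⟩ = ℓ := fun e he ℓ =>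
    ⟨by rintro ⟨e', h, rfl⟩; exact h, fun h => ⟨⟨e, he⟩, h, rfl⟩⟩
  refine ⟨fun ℓ => Subtype.coe_image_subset _ _,
    fun e he => ⟨C ⟨e, he⟩, (mem_iff e he _).2 rfl, fun _ h => ((mem_iff e he _).1 h).symm⟩,
    fun ℓ => hG.isPositiveMatchingOn Set.sdiff_subset ?_ (C.edgesDisjoint_image_colorClass ℓ)⟩
  rintro _ ⟨e, rfl, rfl⟩
  refine ⟨e.2, ?_⟩
  simp only [Set.mem_iUnion, Set.mem_ofPred_eq, not_exists]
  intro ℓ' hlt he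
  exact hlt.ne ((mem_iff e e.2 ℓ').1 he).symm

end SimpleGraph

theorem IsPMDecomp.degree_le {V : Type*} {G : SimpleGraph V} {p : ℕ} {M : Fin p → Set (Sym2 V)}
    (h : IsPMDecomp G p M) (v : V) [Fintype (G.neighborSet v)] : G.degree v ≤ p := by
  choose part hpart _ using fun x : G.neighborSet v => h.2.1 s(v, x) x.2
  rw [← G.card_neighborSet_eq_degree]
  refine (Fintype.card_le_of_injective part fun x x' hxx' => ?_).trans_eq (Fintype.card_fin p)
  by_contra hne
  refine (h.2.2 (part x)).2.1 _ (hpart x) _ (hxx' ▸ hpart x') ?_ v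
    ⟨Sym2.mem_mk_left _ _, Sym2.mem_mk_left _ _⟩
  exact fun hs => hne (Subtype.ext (Sym2.congr_right.1 hs))

theorem pmd_eq_maxDegree_of_forest_general {V : Type*} [Fintype V]
    (G : SimpleGraph V) [DecidableRel G.Adj] (hG : G.IsAcyclic) :
    pmd G = G.maxDegree := by
  obtain ⟨C⟩ := hG.lineGraph_colorable_maxDegree
  have hC := hG.isPMDecomp_colorClass C
  refine le_antisymm (Nat.sInf_le ⟨_, hC⟩) (le_csInf ⟨_, _, hC⟩ ?_)
  rintro p ⟨M, hM⟩
  exact G.maxDegree_le_of_forall_degree_le p fun v => hM.degree_le v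

/-- If `G` is a forest, then `pmd(G) = Δ(G)`. -/
theorem pmd_eq_maxDegree_of_forest {V : Type*} [Fintype V] [DecidableEq V]
    (G : SimpleGraph V) [DecidableRel G.Adj] (hG : G.IsAcyclic) :
    pmd G = G.maxDegree :=
  pmd_eq_maxDegree_of_forest_general G hG
end

section
/- Let G be the star graph K_{1,m} with m > 1. Then the twisted positive matching decomposition number of G is ⌈m/2⌉. -/
/-- A twisted positive mapping for the pair of matchings `(Ma, Mb)` (the parts
`M_{2q-1}` and `M_{2q}`), relative to the set `Erem` of edges remaining at this step.
The weights `w₁`, `w₂` are the weights on the two copies of the vertex set forming the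
auxiliary graph `H_q`; an edge `{i,j} ∈ Ma` with `i < j` gives the edge
`{i_{2q-1}, j_{2q}}` of `H_q` and an edge `{i,j} ∈ Mb` with `i < j` gives the edge
`{j_{2q-1}, i_{2q}}` of `H_q`. -/
def TwistedPosMap {V : Type*} [LinearOrder V] (Erem Ma Mb : Set (Sym2 V)) : Prop :=
  ∃ w₁ w₂ : V → ℝ,
    (∀ i j : V, i < j → s(i, j) ∈ Ma → (0 < w₁ i + w₂ j ∧ w₁ j + w₂ i < 0)) ∧
    (∀ i j : V, i < j → s(i, j) ∈ Mb → (0 < w₁ j + w₂ i ∧ w₁ i + w₂ j < 0)) ∧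
    (∀ i j : V, i < j → s(i, j) ∈ Erem → s(i, j) ∉ Ma → s(i, j) ∉ Mb →
      (w₁ i + w₂ j < 0 ∧ w₁ j + w₂ i < 0))

/-- `M : Fin (2p) → Set (Sym2 V)` is a twisted positive matching decomposition of `G`:
a partition of the edge set into pairwise disjoint matchings satisfying the twisted
matching condition on each consecutive pair, and such that each auxiliary graph `H_q`
admits a twisted positive mapping. -/
def IsTPMDecomp {V : Type*} [LinearOrder V] (G : SimpleGraph V) (p : ℕ)
    (M : Fin (2 * p) → Set (Sym2 V)) : Prop :=
  (∀ ℓ, M ℓ ⊆ G.edgeSet) ∧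
  (∀ e ∈ G.edgeSet, ∃! ℓ, e ∈ M ℓ) ∧
  (∀ ℓ, EdgesDisjoint (M ℓ)) ∧
  (∀ q : Fin p, ∀ i j : V, i < j →
      s(i, j) ∈ M ⟨2 * q.1, by have := q.2; omega⟩ →
      (∀ k, k < i → s(k, i) ∉ M ⟨2 * q.1 + 1, by have := q.2; omega⟩) ∧
      (∀ k, j < k → s(j, k) ∉ M ⟨2 * q.1 + 1, by have := q.2; omega⟩)) ∧
  (∀ q : Fin p, TwistedPosMap
      (G.edgeSet \ ⋃ ℓ ∈ {ℓ : Fin (2 * p) | (ℓ : ℕ) < 2 * q.1}, M ℓ)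
      (M ⟨2 * q.1, by have := q.2; omega⟩)
      (M ⟨2 * q.1 + 1, by have := q.2; omega⟩))

/-- The twisted positive matching decomposition number of `G`. -/
noncomputable def tpmd {V : Type*} [LinearOrder V] (G : SimpleGraph V) : ℕ :=
  sInf {p | ∃ M : Fin (2 * p) → Set (Sym2 V), IsTPMDecomp G p M}

/-- The star graph `K_{1,m}` on vertex set `{0, 1, …, m}`, with edges `{0, i}`. -/
def starGraph (m : ℕ) : SimpleGraph (Fin (m + 1)) :=
  SimpleGraph.fromRel (fun i _ => i = 0)

lemma star_edge_iff (m : ℕ) (e : Sym2 (Fin (m + 1))) :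
    e ∈ (starGraph m).edgeSet ↔ ∃ j : Fin (m + 1), j ≠ 0 ∧ e = s(0, j) := by
  induction e with
  | _ i j =>
    rw [SimpleGraph.mem_edgeSet]
    simp only [starGraph, SimpleGraph.fromRel_adj]
    constructor
    · rintro ⟨hne, rfl | rfl⟩
      · exact ⟨j, fun h => hne h.symm, rfl⟩
      · exact ⟨i, hne, Sym2.eq_swap⟩
    · rintro ⟨k, hk, he⟩
      rw [Sym2.eq_iff] at he
      rcases he with ⟨rfl, rfl⟩ | ⟨rfl, rfl⟩
      · exact ⟨fun h => hk h.symm, Or.inl rfl⟩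
      · exact ⟨hk, Or.inr rfl⟩

lemma star_lt_aux {m : ℕ} {i j k : Fin (m + 1)} (hij : i < j) (h : s(i, j) = s(0, k)) :
    i = 0 ∧ j = k := by
  rw [Sym2.eq_iff] at h
  rcases h with ⟨h1, h2⟩ | ⟨h1, h2⟩
  · exact ⟨h1, h2⟩
  · subst h2; exact absurd hij (Fin.not_lt_zero i)

/-- The matchings for the star graph: `M ℓ = {s(0, ℓ+1)}` (empty if `ℓ+1 > m`). -/
def starM (m p : ℕ) (ℓ : Fin (2 * p)) : Set (Sym2 (Fin (m + 1))) :=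
  {e | ∃ j : Fin (m + 1), (j : ℕ) = (ℓ : ℕ) + 1 ∧ e = s(0, j)}

lemma starM_decomp (m : ℕ) (hm : 1 < m) :
    IsTPMDecomp (starGraph m) ((m + 1) / 2) (starM m ((m + 1) / 2)) := by
  set p := (m + 1) / 2 with hp
  have h2p : m ≤ 2 * p ∧ 2 * p ≤ m + 1 := by omega
  refine ⟨?_, ?_, ?_, ?_, ?_⟩
  · rintro ℓ e ⟨j, hj, rfl⟩
    rw [star_edge_iff]
    refine ⟨j, ?_, rfl⟩
    intro h
    rw [h] at hj
    simp at hj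
  · intro e he
    rw [star_edge_iff] at he
    obtain ⟨j, hj0, rfl⟩ := he
    have hj1 : 1 ≤ (j : ℕ) := by
      rcases Nat.eq_zero_or_pos (j : ℕ) with h | h
      · exact absurd (Fin.ext h) hj0
      · exact h
    have hjm : (j : ℕ) < m + 1 := j.isLt
    refine ⟨⟨(j : ℕ) - 1, by omega⟩, ⟨j, by show (j : ℕ) = (j : ℕ) - 1 + 1; omega, rfl⟩, ?_⟩
    rintro ℓ' ⟨j', hj', he'⟩
    obtain rfl : j = j' := Sym2.congr_right.mp he'
    have hj2 : (j : ℕ) = (ℓ' : ℕ) + 1 := hj'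
    rw [Fin.ext_iff]
    show (ℓ' : ℕ) = (j : ℕ) - 1
    omega
  · rintro ℓ e ⟨j, hj, rfl⟩ e' ⟨j', hj', rfl⟩ hne v
    exact absurd (by rw [Fin.ext_iff.mpr (hj.trans hj'.symm : (j:ℕ) = (j':ℕ))]) hne
  · intro q i j hij hmem
    obtain ⟨j', hj', heq⟩ := hmem
    obtain ⟨rfl, rfl⟩ := star_lt_aux hij heq
    refine ⟨fun k hk => absurd hk (Fin.not_lt_zero k), ?_⟩
    rintro k hk ⟨j'', hj'', heq'⟩
    rw [Sym2.eq_iff] at heq'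
    have hj2 : (j : ℕ) = 2 * q.1 + 1 := hj'
    rcases heq' with ⟨h1, h2⟩ | ⟨h1, h2⟩
    · rw [h1] at hj2
      simp at hj2
    · subst h2; exact absurd hk (Fin.not_lt_zero j)
  · intro q
    refine ⟨fun v => if (v : ℕ) = 0 then 0 else if (v : ℕ) = 2 * q.1 + 2 then 1 else -1,
            fun v => if (v : ℕ) = 0 then 0 else if (v : ℕ) = 2 * q.1 + 1 then 1 else -1,
            ?_, ?_, ?_⟩
    · rintro i j hij ⟨j', hj', heq⟩
      obtain ⟨rfl, rfl⟩ := star_lt_aux hij heq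
      simp only [Fin.val_zero, hj']
      norm_num
    · rintro i j hij ⟨j', hj', heq⟩
      obtain ⟨rfl, rfl⟩ := star_lt_aux hij heq
      simp only [Fin.val_zero, hj']
      norm_num
    · rintro i j hij ⟨hedge, -⟩ hnMa hnMb
      rw [star_edge_iff] at hedge
      obtain ⟨k, hk0, heq⟩ := hedge
      obtain ⟨rfl, rfl⟩ := star_lt_aux hij heq
      have hk1 : (j : ℕ) ≠ 0 := fun h => hk0 (Fin.ext h)
      have hka : (j : ℕ) ≠ 2 * q.1 + 1 := fun h => hnMa ⟨j, h, rfl⟩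
      have hkb : (j : ℕ) ≠ 2 * q.1 + 2 := fun h => hnMb ⟨j, h, rfl⟩
      simp only [Fin.val_zero, if_pos rfl, if_neg hk1, if_neg hka, if_neg hkb]
      norm_num

lemma star_lower (m p : ℕ) (M : Fin (2 * p) → Set (Sym2 (Fin (m + 1))))
    (h : IsTPMDecomp (starGraph m) p M) : (m + 1) / 2 ≤ p := by
  obtain ⟨hsub, huniq, hdisj, -, -⟩ := h
  have he : ∀ k : Fin m, s((0 : Fin (m + 1)), k.succ) ∈ (starGraph m).edgeSet := by
    intro k
    rw [star_edge_iff]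
    exact ⟨k.succ, (Fin.succ_ne_zero k), rfl⟩
  have hEU : ∀ k : Fin m, ∃ ℓ, s((0 : Fin (m + 1)), k.succ) ∈ M ℓ ∧
      ∀ ℓ', s((0 : Fin (m + 1)), k.succ) ∈ M ℓ' → ℓ' = ℓ := fun k => huniq _ (he k)
  choose g hg hgu using hEU
  have ginj : Function.Injective g := by
    intro k k' hkk
    by_contra hne
    have h1 := hg k
    have h2 := hg k'
    rw [hkk] at h1
    have hne' : s((0 : Fin (m + 1)), k.succ) ≠ s((0 : Fin (m + 1)), k'.succ) := by
      intro hEq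
      exact hne (Fin.succ_injective m (Sym2.congr_right.mp hEq))
    exact hdisj (g k') _ h1 _ h2 hne' 0 ⟨by simp, by simp⟩
  have := Fintype.card_le_of_injective g ginj
  simp only [Fintype.card_fin] at this
  omega

/-- For the star graph `K_{1,m}` with `m > 1`,
`tpmd(K_{1,m}) = ⌈m/2⌉`. -/
theorem tpmd_star (m : ℕ) (hm : 1 < m) : tpmd (starGraph m) = (m + 1) / 2 := by
  unfold tpmd
  have hmem : (m + 1) / 2 ∈ {p | ∃ M : Fin (2 * p) → Set (Sym2 (Fin (m + 1))),
      IsTPMDecomp (starGraph m) p M} := ⟨starM m _, starM_decomp m hm⟩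
  obtain ⟨M, hM⟩ := Nat.sInf_mem ⟨_, hmem⟩
  exact le_antisymm (Nat.sInf_le hmem) (star_lower m _ M hM)
end

section
/- For every finite simple graph G, ⌈Δ(G)/2⌉ ≤ tpmd(G) ≤ pmd(G), where Δ(G) is the maximal degree, tpmd is the twisted positive matching decomposition number and pmd the positive matching decomposition number. -/
lemma EdgesDisjoint.eq_of_common {V : Type*} {M : Set (Sym2 V)} (h : EdgesDisjoint M)
    {e e' : Sym2 V} (he : e ∈ M) (he' : e' ∈ M) {v : V} (hv : v ∈ e) (hv' : v ∈ e') :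
    e = e' := by
  by_contra hne
  exact h e he e' he' hne v ⟨hv, hv'⟩

lemma exists_pmd {V : Type*} [Fintype V] [DecidableEq V] (G : SimpleGraph V)
    [DecidableRel G.Adj] : ∃ (p : ℕ) (M : Fin p → Set (Sym2 V)), IsPMDecomp G p M := by
  classical
  set E := G.edgeFinset with hE
  set eqv := E.equivFin with heqv
  refine ⟨E.card, fun ℓ => {(eqv.symm ℓ : Sym2 V)}, ?_, ?_, ?_⟩
  · intro ℓ e he
    rw [Set.mem_singleton_iff] at he
    subst he
    exact SimpleGraph.mem_edgeFinset.mp (eqv.symm ℓ).2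
  · intro e he
    refine ⟨eqv ⟨e, SimpleGraph.mem_edgeFinset.mpr he⟩, by simp, ?_⟩
    intro ℓ hℓ
    rw [Set.mem_singleton_iff] at hℓ
    have : eqv.symm ℓ = ⟨e, SimpleGraph.mem_edgeFinset.mpr he⟩ := Subtype.ext hℓ.symm
    rw [← this, Equiv.apply_symm_apply]
  · intro ℓ
    have he : (eqv.symm ℓ : Sym2 V) ∈ G.edgeSet :=
      SimpleGraph.mem_edgeFinset.mp (eqv.symm ℓ).2
    obtain ⟨a, b, hab⟩ : ∃ a b : V, (eqv.symm ℓ : Sym2 V) = s(a, b) :=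
      Sym2.ind (fun a b => ⟨a, b, rfl⟩) ((eqv.symm ℓ : Sym2 V))
    have hadj : G.Adj a b := by rw [hab] at he; exact he
    refine ⟨?_, ?_, ?_⟩
    · intro x hx
      rw [Set.mem_singleton_iff] at hx
      subst hx
      refine ⟨he, ?_⟩
      intro hU
      simp only [Set.mem_iUnion, Set.mem_setOf_eq, exists_prop] at hU
      obtain ⟨ℓ', hlt, hmem⟩ := hU
      rw [Set.mem_singleton_iff] at hmem
      have : eqv.symm ℓ = eqv.symm ℓ' := Subtype.ext hmem
      have : ℓ = ℓ' := eqv.symm.injective this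
      exact absurd hlt (by rw [← this]; exact lt_irrefl _)
    · intro e1 h1 e2 h2 hne
      rw [Set.mem_singleton_iff] at h1 h2
      exact absurd (h1.trans h2.symm) hne
    · refine ⟨fun v => if v = a ∨ v = b then (1 : ℝ) else -3, ?_⟩
      intro i j hij
      have hadj' : G.Adj i j := hij.1
      have hne : i ≠ j := hadj'.ne
      constructor
      · intro hm
        rw [Set.mem_singleton_iff, hab, Sym2.eq_iff] at hm
        rcases hm with ⟨rfl, rfl⟩ | ⟨rfl, rfl⟩ <;> simp <;> norm_num
      · intro hm
        have key : ¬((i = a ∨ i = b) ∧ (j = a ∨ j = b)) := by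
          rintro ⟨hi, hj⟩
          apply hm
          rw [Set.mem_singleton_iff, hab, Sym2.eq_iff]
          rcases hi with rfl | rfl <;> rcases hj with rfl | rfl
          · exact absurd rfl hne
          · exact Or.inl ⟨rfl, rfl⟩
          · exact Or.inr ⟨rfl, rfl⟩
          · exact absurd rfl hne
        by_cases hi : i = a ∨ i = b <;> by_cases hj : j = a ∨ j = b
        · exact absurd ⟨hi, hj⟩ key
        · simp only [if_pos hi, if_neg hj]; norm_num
        · simp only [if_neg hi, if_pos hj]; norm_num
        · simp only [if_neg hi, if_neg hj]; norm_num


def pairify {V : Type*} (p : ℕ) (M : Fin p → Set (Sym2 V)) : Fin (2 * p) → Set (Sym2 V) :=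
  fun ℓ => if ℓ.1 % 2 = 0 then M ⟨ℓ.1 / 2, by have := ℓ.2; omega⟩ else ∅

lemma mem_pairify {V : Type*} {p : ℕ} {M : Fin p → Set (Sym2 V)} {e : Sym2 V}
    {ℓ : Fin (2 * p)} :
    e ∈ pairify p M ℓ ↔ ℓ.1 % 2 = 0 ∧ e ∈ M ⟨ℓ.1 / 2, by have := ℓ.2; omega⟩ := by
  unfold pairify
  split_ifs with h <;> simp [h]

lemma pairify_even {V : Type*} {p : ℕ} {M : Fin p → Set (Sym2 V)} (k : Fin p)
    (h2 : 2 * k.1 < 2 * p) : pairify p M ⟨2 * k.1, h2⟩ = M k := by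
  unfold pairify
  dsimp only
  rw [if_pos (by omega)]
  have h3 : 2 * k.1 / 2 = k.1 := by omega
  exact congrArg M (Fin.ext h3)

lemma pairify_odd {V : Type*} {p : ℕ} {M : Fin p → Set (Sym2 V)} (k : ℕ)
    (h2 : 2 * k + 1 < 2 * p) : pairify p M ⟨2 * k + 1, h2⟩ = ∅ := by
  unfold pairify
  dsimp only
  rw [if_neg (by omega)]

lemma tpmd_of_pmd {V : Type*} [LinearOrder V] (G : SimpleGraph V) (p : ℕ)
    (M : Fin p → Set (Sym2 V)) (h : IsPMDecomp G p M) :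
    ∃ M' : Fin (2 * p) → Set (Sym2 V), IsTPMDecomp G p M' := by
  classical
  obtain ⟨hsub, hcov, hpos⟩ := h
  refine ⟨pairify p M, ?_, ?_, ?_, ?_, ?_⟩
  · intro ℓ e he
    rw [mem_pairify] at he
    exact hsub _ he.2
  · intro e he
    obtain ⟨k, hk, huniq⟩ := hcov e he
    refine ⟨⟨2 * k.1, by have := k.2; omega⟩, ?_, ?_⟩
    · show e ∈ pairify p M ⟨2 * k.1, by have := k.2; omega⟩
      rw [pairify_even k]; exact hk
    · intro ℓ' hℓ'
      rw [mem_pairify] at hℓ'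
      obtain ⟨hev, hm⟩ := hℓ'
      have := huniq _ hm
      apply Fin.ext
      have : ℓ'.1 / 2 = k.1 := congrArg Fin.val this
      simp only
      omega
  · intro ℓ e he e' he' hne v
    rw [mem_pairify] at he he'
    exact (hpos _).2.1 e he.2 e' he'.2 hne v
  · intro q i j hij hmem
    constructor <;> intro k hk hmem' <;>
      · rw [pairify_odd q.1 (by have := q.2; omega)] at hmem'
        exact hmem'
  · intro q
    have hU : (⋃ ℓ ∈ {ℓ : Fin (2 * p) | (ℓ : ℕ) < 2 * q.1}, pairify p M ℓ) =
        ⋃ ℓ' ∈ {ℓ' : Fin p | ℓ' < q}, M ℓ' := by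
      ext e
      simp only [Set.mem_iUnion, Set.mem_setOf_eq, exists_prop]
      constructor
      · rintro ⟨ℓ, hlt, hmem⟩
        rw [mem_pairify] at hmem
        exact ⟨⟨ℓ.1 / 2, by have := ℓ.2; omega⟩, by rw [Fin.lt_def]; simp; omega, hmem.2⟩
      · rintro ⟨k, hlt, hm⟩
        rw [Fin.lt_def] at hlt
        refine ⟨⟨2 * k.1, by have := k.2; omega⟩, by simp; omega, ?_⟩
        rw [pairify_even k]
        exact hm
    rw [pairify_even q (by have := q.2; omega), pairify_odd q.1 (by have := q.2; omega), hU]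
    obtain ⟨hsub', hdisj', w, hw⟩ := hpos q
    set Erem := G.edgeSet \ ⋃ ℓ' ∈ {ℓ' : Fin p | ℓ' < q}, M ℓ' with hErem
    -- partner-based correction
    set c : V → ℝ := fun v =>
      if hp : ∃ u, v < u ∧ s(v, u) ∈ M q then 2 * (w v + w hp.choose) else 0 with hc
    have hc_nonneg : ∀ v, 0 ≤ c v := by
      intro v
      rw [hc]
      simp only
      split_ifs with hp
      · obtain ⟨hvu, hmem⟩ := hp.choose_spec
        have := (hw v hp.choose (hsub' hmem)).1 hmem
        linarith
      · exact le_refl 0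
    refine ⟨w, fun v => w v - c v, ?_, ?_, ?_⟩
    · intro i j hij hm
      have hE := hsub' hm
      have hposij := (hw i j hE).1 hm
      have hci : c i = 2 * (w i + w j) := by
        rw [hc]
        simp only
        have hex : ∃ u, i < u ∧ s(i, u) ∈ M q := ⟨j, hij, hm⟩
        rw [dif_pos hex]
        obtain ⟨hiu, hmemu⟩ := hex.choose_spec
        have heq : s(i, hex.choose) = s(i, j) :=
          hdisj'.eq_of_common hmemu hm (Sym2.mem_mk_left i hex.choose)
            (Sym2.mem_mk_left i j)
        rw [Sym2.eq_iff] at heq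
        rcases heq with ⟨-, rfl⟩ | ⟨h1, -⟩
        · rfl
        · exact absurd h1 hij.ne
      have hcj : c j = 0 := by
        rw [hc]
        simp only
        rw [dif_neg]
        rintro ⟨u, hju, hmemu⟩
        have heq : s(j, u) = s(i, j) :=
          hdisj'.eq_of_common hmemu hm (Sym2.mem_mk_left j u) (Sym2.mem_mk_right i j)
        rw [Sym2.eq_iff] at heq
        rcases heq with ⟨h1, -⟩ | ⟨-, h2⟩
        · exact absurd h1 hij.ne'
        · exact lt_asymm hij (h2 ▸ hju)
      refine ⟨show 0 < w i + (w j - c j) by rw [hcj]; linarith,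
        show w j + (w i - c i) < 0 by rw [hci]; linarith⟩
    · intro i j hij hm
      exact hm.elim
    · intro i j hij hE hma _
      have := (hw i j hE).2 hma
      have h1 := hc_nonneg i
      have h2 := hc_nonneg j
      exact ⟨show w i + (w j - c j) < 0 by linarith,
        show w j + (w i - c i) < 0 by linarith⟩

open SimpleGraph

/-- For every finite simple graph `G`,
`⌈Δ(G)/2⌉ ≤ tpmd(G) ≤ pmd(G)`. -/
theorem tpmd_between {V : Type*} [Fintype V] [LinearOrder V]
    (G : SimpleGraph V) [DecidableRel G.Adj] :
    (G.maxDegree + 1) / 2 ≤ tpmd G ∧ tpmd G ≤ pmd G := by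
  classical
  obtain ⟨p₀, M₀, hM₀⟩ := exists_pmd G
  have hpmd_ne : {p : ℕ | ∃ M : Fin p → Set (Sym2 V), IsPMDecomp G p M}.Nonempty :=
    ⟨p₀, M₀, hM₀⟩
  obtain ⟨M₁, hM₁⟩ : ∃ M : Fin (pmd G) → Set (Sym2 V), IsPMDecomp G (pmd G) M :=
    Nat.sInf_mem hpmd_ne
  obtain ⟨M₂, hM₂⟩ := tpmd_of_pmd G (pmd G) M₁ hM₁
  have h2 : tpmd G ≤ pmd G := Nat.sInf_le ⟨M₂, hM₂⟩
  have htne : {p : ℕ | ∃ M : Fin (2 * p) → Set (Sym2 V), IsTPMDecomp G p M}.Nonempty :=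
    ⟨pmd G, M₂, hM₂⟩
  obtain ⟨M₃, hM₃⟩ : ∃ M : Fin (2 * tpmd G) → Set (Sym2 V), IsTPMDecomp G (tpmd G) M :=
    Nat.sInf_mem htne
  have hdeg : ∀ v : V, G.degree v ≤ 2 * tpmd G := by
    intro v
    rw [← card_incidenceFinset_eq_degree]
    by_cases hp : 2 * tpmd G = 0
    · have hemp : G.incidenceFinset v = ∅ := by
        rw [Finset.eq_empty_iff_forall_notMem]
        intro e he
        rw [mem_incidenceFinset] at he
        obtain ⟨ℓ, -, -⟩ := hM₃.2.1 e he.1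
        have := ℓ.2
        omega
      rw [hemp]
      simp
    · calc (G.incidenceFinset v).card
          ≤ (Finset.univ : Finset (Fin (2 * tpmd G))).card := by
            apply Finset.card_le_card_of_injOn
              (fun e => if he : e ∈ G.edgeSet then (hM₃.2.1 e he).choose
                else ⟨0, by omega⟩)
            · intro e _
              exact Finset.mem_univ _
            · intro e he e' he' heq
              rw [Finset.mem_coe, mem_incidenceFinset] at he he'
              simp only [dif_pos he.1, dif_pos he'.1] at heq
              have hm : e ∈ M₃ (hM₃.2.1 e he.1).choose := (hM₃.2.1 e he.1).choose_spec.1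
              have hm' : e' ∈ M₃ (hM₃.2.1 e' he'.1).choose :=
                (hM₃.2.1 e' he'.1).choose_spec.1
              rw [heq] at hm
              exact (hM₃.2.2.1 _).eq_of_common hm hm' he.2 he'.2
        _ = 2 * tpmd G := by simp
  have hmax : G.maxDegree ≤ 2 * tpmd G := G.maxDegree_le_of_forall_degree_le _ hdeg
  exact ⟨by omega, h2⟩
end

section
/- Let G be a graph and H an induced subgraph of G. Then for all i, j ≥ 0 and s ≥ 1, the graded Betti numbers satisfy β_{i,j}(S_H/L_H(d)ˢ) ≤ β_{i,j}(S/L_G(d)ˢ). In particular, reg(S/L_G(d)ˢ) ≥ reg(S_H/L_H(d)ˢ). -/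
/-- The Lovász–Saks–Schrijver ideal `L_G(d)` of a graph `G`, in the polynomial ring
`k[x_{iℓ} : i ∈ V, ℓ ∈ [d]]`: it is generated by the forms
`f_e = ∑_{ℓ=1}^d x_{iℓ} x_{jℓ}` for the edges `e = {i,j}` of `G`. -/
noncomputable def LSS (k : Type*) [Field k] {V : Type*} (G : SimpleGraph V) (d : ℕ) :
    Ideal (MvPolynomial (V × Fin d) k) :=
  Ideal.span {f | ∃ i j : V, G.Adj i j ∧
    f = ∑ ℓ : Fin d, MvPolynomial.X (i, ℓ) * MvPolynomial.X (j, ℓ)}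

/-- A minimal graded free resolution of the ideal `I` (as a module) over the standard
graded polynomial ring `S = k[x_i]`:
`⋯ → F₂ → F₁ → F₀ → I → 0`, where `F_i = ⊕_{c} S(−deg i c)` is free of rank `b i`,
the augmentation `F₀ → I ⊆ S` is given by homogeneous generators `g`, the differentials
are given by matrices `A i : F_{i+1} → F_i` whose entries are homogeneous of the degree
prescribed by the twists, minimality being the requirement that all nonzero entries have
positive degree.  Augmenting by `S → S/I` it also serves as the minimal graded free
resolution of `S/I`, in which `F_i` sits in homological degree `i + 1`. -/
structure MinFreeRes {k : Type*} [Field k] {σ : Type*}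
    (I : Ideal (MvPolynomial σ k)) where
  /-- the rank of the `i`-th free module `F_i` -/
  b : ℕ → ℕ
  /-- the twists: `F_i = ⊕_c S(−deg i c)` -/
  deg : (i : ℕ) → Fin (b i) → ℕ
  /-- the augmentation `F₀ → I`, i.e. a minimal system of homogeneous generators of `I` -/
  g : Fin (b 0) → MvPolynomial σ k
  /-- the differential `F_{i+1} → F_i`, as a matrix acting by `Matrix.mulVec` -/
  A : (i : ℕ) → Matrix (Fin (b i)) (Fin (b (i + 1))) (MvPolynomial σ k)
  g_ne : ∀ c, g c ≠ 0
  g_hom : ∀ c, (g c).IsHomogeneous (deg 0 c)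
  g_span : Ideal.span (Set.range g) = I
  /-- graded minimality: every nonzero entry of a differential is homogeneous of the
  degree prescribed by the twists, and that degree is positive -/
  A_hom : ∀ i r c, A i r c ≠ 0 →
    deg i r < deg (i + 1) c ∧ (A i r c).IsHomogeneous (deg (i + 1) c - deg i r)
  /-- exactness at `F₀` -/
  exact0 : LinearMap.ker
      (Fintype.linearCombination (MvPolynomial σ k) g)
    = LinearMap.range (A 0).mulVecLin
  /-- exactness at `F_{i+1}` -/
  exact : ∀ i, LinearMap.ker (A i).mulVecLin = LinearMap.range (A (i + 1)).mulVecLin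

/-!
The inclusion `S_H → S` (`rename`) and the projection `S → S_H` killing the variables `x_{iℓ}`
with `i ∉ U` (`killCompl`) are graded, carry `L_H(d)ˢ` and `L_G(d)ˢ` into each other, and compose
to the identity of `S_H`. By the comparison theorem they lift to graded chain maps `Φ : F_H → F_G`
and `Ψ : F_G → F_H` between the minimal resolutions, and `Ψ ∘ Φ` lifts the identity of `F_H`.
Minimality makes every lift of the identity invertible modulo the maximal ideal, so `Φ` is
injective modulo the maximal ideal; being degree-preserving, it embeds the degree-`j` part of
`k ⊗ F_{H,i}` into that of `k ⊗ F_{G,i}`. The regularity bound follows, as every twist of `F_H`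
is then a twist of `F_G`.
-/

open MvPolynomial

namespace MvPolynomial

variable {R σ τ : Type*} [CommSemiring R] {p : MvPolynomial σ R} {a n : ℕ}

theorem IsHomogeneous.homogeneousComponent_mul_eq (hp : p.IsHomogeneous a)
    (q : MvPolynomial σ R) (n : ℕ) :
    homogeneousComponent n (p * q) =
      if a ≤ n then p * homogeneousComponent (n - a) q else 0 := by
  conv_lhs => rw [← sum_homogeneousComponent q, Finset.mul_sum, map_sum]
  have hterm : ∀ m, homogeneousComponent n (p * homogeneousComponent m q) =
      if a ≤ n ∧ m = n - a then p * homogeneousComponent m q else 0 := fun m => by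
    rw [homogeneousComponent_of_mem (hp.mul (homogeneousComponent_isHomogeneous m q))]
    exact if_congr (by omega) rfl rfl
  simp_rw [hterm, ite_and, Finset.sum_ite_irrel, Finset.sum_ite_eq', Finset.sum_const_zero]
  split_ifs with h h' <;> try rfl
  simp only [Finset.mem_range, not_lt] at h'
  rw [homogeneousComponent_eq_zero _ _ (by omega), mul_zero]

theorem IsHomogeneous.eq_zero_of_constantCoeff_ne_zero (hp : p.IsHomogeneous n)
    (h : constantCoeff p ≠ 0) : n = 0 := by
  simpa using (hp h).symm

theorem IsHomogeneous.eq_C_constantCoeff (hp : p.IsHomogeneous 0) :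
    p = C (constantCoeff p) := by
  conv_lhs => rw [← homogeneousComponent_eq_self hp, homogeneousComponent_zero]
  rfl

def IsGradedHom (f : MvPolynomial σ R →+* MvPolynomial τ R) : Prop :=
  ∀ ⦃n : ℕ⦄ ⦃p : MvPolynomial σ R⦄, p.IsHomogeneous n → (f p).IsHomogeneous n

theorem isGradedHom_rename (f : σ → τ) : IsGradedHom (rename (R := R) f).toRingHom :=
  fun _ _ hp => hp.rename_isHomogeneous

theorem killCompl_X_of_notMem {f : σ → τ} (hf : Function.Injective f) {a : τ}
    (ha : a ∉ Set.range f) : killCompl (R := R) hf (X a) = 0 := by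
  simp [killCompl, ha]

theorem isGradedHom_killCompl {f : σ → τ} (hf : Function.Injective f) :
    IsGradedHom (killCompl (R := R) hf).toRingHom := fun n _ hp => by
  rw [← one_mul n]
  refine hp.aeval _ fun i => ?_
  split_ifs
  exacts [isHomogeneous_X _ _, isHomogeneous_zero _ _ _]

end MvPolynomial

theorem Ideal.map_pow_le_pow {R S : Type*} [CommSemiring R] [CommSemiring S] {f : R →+* S}
    {I : Ideal R} {J : Ideal S} (h : I.map f ≤ J) (s : ℕ) : (I ^ s).map f ≤ J ^ s :=
  (Ideal.map_pow f I s).trans_le (Ideal.pow_right_mono h s)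

theorem Fintype.forall_le_of_card_fiber_le {α β : Type*} [Fintype α] [Fintype β] {D : α → ℕ}
    {D' : β → ℕ} (h : ∀ j, card {a // D a = j} ≤ card {b // D' b = j}) {N : ℕ}
    (hD' : ∀ b, D' b ≤ N) (a : α) : D a ≤ N := by
  by_contra! ha
  have hempty : IsEmpty {b // D' b = D a} := ⟨fun b => by have := hD' b.1; have := b.2; omega⟩
  have := (card_pos_iff.mpr ⟨⟨a, rfl⟩⟩).trans_le (h (D a))
  rw [card_eq_zero (α := {b // D' b = D a})] at this
  exact lt_irrefl 0 this

namespace Matrix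

section CommSemiring

variable {R σ ρ χ ξ : Type*} [CommSemiring R]

/-- `v` is a homogeneous element of degree `t` of the graded free module `⊕ᵣ S(-D r)`. -/
def IsHomogeneousVec (D : ρ → ℕ) (t : ℕ) (v : ρ → MvPolynomial σ R) : Prop :=
  ∀ r, v r = 0 ∨ D r ≤ t ∧ (v r).IsHomogeneous (t - D r)

/-- `M` is a degree-preserving map `⊕_c S(-Dc c) → ⊕_r S(-Dr r)`. -/
def IsHomogeneousMatrix (Dr : ρ → ℕ) (Dc : χ → ℕ) (M : Matrix ρ χ (MvPolynomial σ R)) :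
    Prop :=
  ∀ c, IsHomogeneousVec Dr (Dc c) (fun r => M r c)

variable {Dr : ρ → ℕ} {Dc : χ → ℕ} {M : Matrix ρ χ (MvPolynomial σ R)}

theorem IsHomogeneousMatrix.mulVec [Fintype χ] (hM : IsHomogeneousMatrix Dr Dc M) {t : ℕ}
    {v : χ → MvPolynomial σ R} (hv : IsHomogeneousVec Dc t v) :
    IsHomogeneousVec Dr t (M *ᵥ v) := by
  intro r
  have hterm : ∀ c, M r c * v c = 0 ∨ Dr r ≤ t ∧ (M r c * v c).IsHomogeneous (t - Dr r) := by
    intro c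
    obtain h | ⟨hle, hM⟩ := hM c r
    · simp [h]
    obtain h | ⟨hle', hv⟩ := hv c
    · simp [h]
    exact Or.inr ⟨hle.trans hle', by convert hM.mul hv using 1; omega⟩
  by_cases hr : Dr r ≤ t
  · refine Or.inr ⟨hr, IsHomogeneous.sum _ _ _ fun c _ => ?_⟩
    obtain h | h := hterm c
    · exact h ▸ isHomogeneous_zero _ _ _
    · exact h.2
  · exact Or.inl <| Finset.sum_eq_zero fun c _ => (hterm c).resolve_right fun h => hr h.1

theorem IsHomogeneousMatrix.mul [Fintype χ] {E : ξ → ℕ} {N : Matrix χ ξ (MvPolynomial σ R)}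
    (hM : IsHomogeneousMatrix Dr Dc M) (hN : IsHomogeneousMatrix Dc E N) :
    IsHomogeneousMatrix Dr E (M * N) :=
  fun c => hM.mulVec (hN c)

theorem IsHomogeneousMatrix.map {τ : Type*} (hM : IsHomogeneousMatrix Dr Dc M)
    {f : MvPolynomial σ R →+* MvPolynomial τ R} (hf : IsGradedHom f) :
    IsHomogeneousMatrix Dr Dc (M.map f) := by
  intro c r
  obtain h | ⟨hle, hM⟩ := hM c r
  · exact Or.inl (by simp [h])
  · exact Or.inr ⟨hle, hf hM⟩

theorem IsHomogeneousMatrix.eq_of_constantCoeff_ne_zero (hM : IsHomogeneousMatrix Dr Dc M)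
    {r : ρ} {c : χ} (h : constantCoeff (M r c) ≠ 0) : Dr r = Dc c := by
  obtain h' | ⟨hle, hM⟩ := hM c r
  · simp [h'] at h
  · have := hM.eq_zero_of_constantCoeff_ne_zero h
    omega

/-- Take the homogeneous components of the right degrees of an arbitrary solution. -/
theorem IsHomogeneousMatrix.exists_isHomogeneousVec_mulVec_eq [Fintype χ]
    (hM : IsHomogeneousMatrix Dr Dc M) {t : ℕ} {w : ρ → MvPolynomial σ R}
    (hw : IsHomogeneousVec Dr t w) {v : χ → MvPolynomial σ R} (hv : M *ᵥ v = w) :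
    ∃ v', M *ᵥ v' = w ∧ IsHomogeneousVec Dc t v' := by
  classical
  let v' c := if Dc c ≤ t then homogeneousComponent (t - Dc c) (v c) else 0
  have hterm : ∀ r c, M r c * v' c =
      if Dr r ≤ t then homogeneousComponent (t - Dr r) (M r c * v c) else 0 := by
    intro r c
    obtain h | ⟨hle, hM⟩ := hM c r
    · simp [h]
    rw [hM.homogeneousComponent_mul_eq]
    by_cases hc : Dc c ≤ t
    · simp only [v', if_pos hc, if_pos (hle.trans hc), if_pos (by omega : Dc c - Dr r ≤ t - Dr r),
        show t - Dr r - (Dc c - Dr r) = t - Dc c by omega]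
    · simp only [v', if_neg hc, mul_zero]
      by_cases hr : Dr r ≤ t
      · rw [if_pos hr, if_neg (by omega)]
      · rw [if_neg hr]
  refine ⟨v', funext fun r => ?_, fun c => ?_⟩
  · have hwr : w r = if Dr r ≤ t then homogeneousComponent (t - Dr r) (w r) else 0 := by
      obtain h | ⟨hle, hw⟩ := hw r
      · simp [h]
      · rw [if_pos hle, homogeneousComponent_eq_self hw]
    calc (M *ᵥ v') r = ∑ c, M r c * v' c := rfl
      _ = if Dr r ≤ t then homogeneousComponent (t - Dr r) ((M *ᵥ v) r) else 0 := by
        simp_rw [hterm]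
        split_ifs
        · rw [Matrix.mulVec, dotProduct, map_sum]
        · simp
      _ = w r := by rw [hv, ← hwr]
  · by_cases hc : Dc c ≤ t
    · exact Or.inr ⟨hc, by simpa [v', hc] using homogeneousComponent_isHomogeneous _ _⟩
    · exact Or.inl (by simp [v', hc])

theorem IsHomogeneousMatrix.exists_isHomogeneousMatrix_mul_eq [Fintype χ] {E : ξ → ℕ}
    (hM : IsHomogeneousMatrix Dr Dc M) {N : Matrix ρ ξ (MvPolynomial σ R)}
    (hN : IsHomogeneousMatrix Dr E N) {Y : Matrix χ ξ (MvPolynomial σ R)} (hY : M * Y = N) :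
    ∃ Y' : Matrix χ ξ (MvPolynomial σ R), M * Y' = N ∧ IsHomogeneousMatrix Dc E Y' := by
  have hcol c := hM.exists_isHomogeneousVec_mulVec_eq (hN c) (v := fun b => Y b c)
    (funext fun r => by rw [← hY]; rfl)
  choose v hv hvhom using hcol
  exact ⟨of fun b c => v c b, ext fun r c => congrFun (hv c) r, hvhom⟩

end CommSemiring

section CommRing

variable {R σ n : Type*} [CommRing R] [Fintype n] [DecidableEq n] {D : n → ℕ}
  {M : Matrix n n (MvPolynomial σ R)}

theorem IsHomogeneousMatrix.det_isHomogeneous_zero (hM : IsHomogeneousMatrix D D M) :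
    M.det.IsHomogeneous 0 := by
  rw [det_apply]
  refine IsHomogeneous.sum _ _ _ fun τ _ => ?_
  have hprod : (∏ i, M (τ i) i).IsHomogeneous 0 := by
    by_cases hz : ∃ i, M (τ i) i = 0
    · obtain ⟨i, hi⟩ := hz
      rw [Finset.prod_eq_zero (f := fun j => M (τ j) j) (Finset.mem_univ i) hi]
      exact isHomogeneous_zero _ _ _
    push Not at hz
    have hle i := (hM i (τ i)).resolve_left (hz i)
    -- a permutation cannot raise any degree without lowering another
    have heq := (Finset.sum_eq_sum_iff_of_le fun i _ => (hle i).1).mp (Equiv.sum_comp τ D)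
    simpa [heq] using IsHomogeneous.prod _ _ _ fun i _ => (hle i).2
  exact (mem_homogeneousSubmodule _ _).mp
    (zsmul_mem ((mem_homogeneousSubmodule _ _).mpr hprod) _)

theorem IsHomogeneousMatrix.isUnit_det (hM : IsHomogeneousMatrix D D M)
    (h : IsUnit (M.map constantCoeff)) : IsUnit M.det := by
  rw [hM.det_isHomogeneous_zero.eq_C_constantCoeff, RingHom.map_det]
  exact ((isUnit_iff_isUnit_det _).mp h).map C

end CommRing

theorem comp_vecMul_map {m n R S : Type*} [Fintype m] [CommSemiring R] [CommSemiring S]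
    (f : R →+* S) (v : m → R) (M : Matrix m n R) : (f ∘ v) ᵥ* M.map f = f ∘ (v ᵥ* M) :=
  funext fun c => (RingHom.map_vecMul f M v c).symm

theorem comp_mulVec_map {m n R S : Type*} [Fintype n] [CommSemiring R] [CommSemiring S]
    (f : R →+* S) (M : Matrix m n R) (v : n → R) : f ∘ (M *ᵥ v) = M.map f *ᵥ (f ∘ v) :=
  funext (RingHom.map_mulVec f M v)

theorem exists_mul_eq_of_forall_exists_mulVec_eq {S m n p : Type*} [CommSemiring S] [Fintype n]
    {B : Matrix m n S} {M : Matrix m p S} (h : ∀ c, ∃ u, B *ᵥ u = fun r => M r c) :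
    ∃ Y : Matrix n p S, B * Y = M := by
  choose u hu using h
  exact ⟨of fun b c => u c b, ext fun r c => congrFun (hu c) r⟩

/-- `P` restricts to an injective map between the blocks of degree `j`. -/
theorem card_fiber_le_of_injective_mulVec {K nG nH : Type*} [Field K] [Fintype nG] [Fintype nH]
    {DG : nG → ℕ} {DH : nH → ℕ} {P : Matrix nG nH K} (hP : ∀ r c, P r c ≠ 0 → DG r = DH c)
    (hinj : Function.Injective P.mulVec) (j : ℕ) :
    Fintype.card {c // DH c = j} ≤ Fintype.card {r // DG r = j} := by
  classical
  let P' : Matrix {r // DG r = j} {c // DH c = j} K := P.submatrix Subtype.val Subtype.val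
  suffices Function.Injective P'.mulVecLin by
    simpa using LinearMap.finrank_le_finrank_of_injective this
  refine (injective_iff_map_eq_zero _).mpr fun x hx => ?_
  let x' (c : nH) : K := if h : DH c = j then x ⟨c, h⟩ else 0
  have hx' : P *ᵥ x' = 0 := by
    funext r
    have hsum : (P *ᵥ x') r = ∑ c : {c // DH c = j}, P r c * x c := by
      have hin (c : {c // DH c = j}) : x' c = x c := dif_pos c.2
      have hout (c : {c // ¬DH c = j}) : x' c = 0 := dif_neg c.2
      rw [Matrix.mulVec, dotProduct,
        ← Fintype.sum_subtype_add_sum_subtype (fun c => DH c = j)]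
      simp [hin, hout]
    rw [hsum]
    by_cases hr : DG r = j
    · exact congrFun hx ⟨r, hr⟩
    · refine Finset.sum_eq_zero fun c _ => ?_
      rw [not_ne_iff.mp fun h => hr ((hP r c h).trans c.2), zero_mul]
  funext c
  simpa [x', c.2] using congrFun (hinj (hx'.trans (Matrix.mulVec_zero P).symm)) c

end Matrix

namespace MinFreeRes

open Matrix

variable {k σ : Type*} [Field k] {I : Ideal (MvPolynomial σ k)}

section

variable (R : MinFreeRes I)

theorem isHomogeneousMatrix_A (i : ℕ) : IsHomogeneousMatrix (R.deg i) (R.deg (i + 1)) (R.A i) :=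
  fun c r => or_iff_not_imp_left.mpr fun h => ⟨(R.A_hom i r c h).1.le, (R.A_hom i r c h).2⟩

theorem map_constantCoeff_A (i : ℕ) : (R.A i).map constantCoeff = 0 := by
  ext r c
  by_cases h : R.A i r c = 0
  · simp [h]
  · have := (R.A_hom i r c h).1
    rw [map_apply, constantCoeff_eq]
    exact (R.A_hom i r c h).2.coeff_eq_zero (by rw [map_zero]; omega)

theorem g_mem (c : Fin (R.b 0)) : R.g c ∈ I :=
  R.g_span.le (Ideal.subset_span ⟨c, rfl⟩)

theorem exists_A_zero_mulVec_eq {v : Fin (R.b 0) → MvPolynomial σ k} (hv : v ⬝ᵥ R.g = 0) :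
    ∃ u, R.A 0 *ᵥ u = v := by
  have : v ∈ LinearMap.ker (Fintype.linearCombination (MvPolynomial σ k) R.g) := by
    simpa [Fintype.linearCombination_apply, dotProduct] using hv
  rw [R.exact0] at this
  exact this

theorem exists_A_succ_mulVec_eq {i : ℕ} {v : Fin (R.b (i + 1)) → MvPolynomial σ k}
    (hv : R.A i *ᵥ v = 0) : ∃ u, R.A (i + 1) *ᵥ u = v := by
  have : v ∈ LinearMap.ker (R.A i).mulVecLin := hv
  rw [R.exact i] at this
  exact this

theorem exists_A_zero_mul_eq {n : Type*} {M : Matrix (Fin (R.b 0)) n (MvPolynomial σ k)}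
    (hM : R.g ᵥ* M = 0) :
    ∃ Y : Matrix (Fin (R.b 1)) n (MvPolynomial σ k), R.A 0 * Y = M :=
  exists_mul_eq_of_forall_exists_mulVec_eq fun c =>
    R.exists_A_zero_mulVec_eq <| by rw [dotProduct_comm]; exact congrFun hM c

theorem exists_A_succ_mul_eq {i : ℕ} {n : Type*}
    {M : Matrix (Fin (R.b (i + 1))) n (MvPolynomial σ k)} (hM : R.A i * M = 0) :
    ∃ Y : Matrix (Fin (R.b (i + 2))) n (MvPolynomial σ k), R.A (i + 1) * Y = M :=
  exists_mul_eq_of_forall_exists_mulVec_eq fun c =>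
    R.exists_A_succ_mulVec_eq <| funext fun r => congrFun (congrFun hM r) c

theorem vecMul_A_zero : R.g ᵥ* R.A 0 = 0 := by
  funext c
  have : (fun r => R.A 0 r c) ∈ LinearMap.ker (Fintype.linearCombination _ R.g) := by
    rw [R.exact0]
    exact ⟨Pi.single c 1, mulVec_single_one _ c⟩
  simpa [Fintype.linearCombination_apply, vecMul, dotProduct, mul_comm] using this

theorem A_mul_A (i : ℕ) : R.A i * R.A (i + 1) = 0 := by
  refine Matrix.ext fun r c => ?_
  have : (fun b => R.A (i + 1) b c) ∈ LinearMap.ker (R.A i).mulVecLin := by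
    rw [R.exact i]
    exact ⟨Pi.single c 1, mulVec_single_one _ c⟩
  exact congrFun this r

theorem exists_vecMul_g_eq {n : Type*} {E : n → ℕ} {h : n → MvPolynomial σ k}
    (hI : ∀ c, h c ∈ I) (hh : ∀ c, (h c).IsHomogeneous (E c)) :
    ∃ M, R.g ᵥ* M = h ∧ IsHomogeneousMatrix (R.deg 0) E M := by
  have hg : IsHomogeneousMatrix (fun _ : Unit => 0) (R.deg 0) (replicateRow Unit R.g) :=
    fun c _ => Or.inr ⟨Nat.zero_le _, by simpa using R.g_hom c⟩
  have hh' : IsHomogeneousMatrix (fun _ : Unit => 0) E (replicateRow Unit h) :=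
    fun c _ => Or.inr ⟨Nat.zero_le _, by simpa using hh c⟩
  obtain ⟨Y, hY⟩ : ∃ Y : Matrix (Fin (R.b 0)) n (MvPolynomial σ k),
      replicateRow Unit R.g * Y = replicateRow Unit h := by
    refine exists_mul_eq_of_forall_exists_mulVec_eq fun c => ?_
    obtain ⟨u, hu⟩ := (Submodule.mem_span_range_iff_exists_fun _).mp (R.g_span ▸ hI c)
    exact ⟨u, funext fun _ => by simpa [mulVec, dotProduct, mul_comm] using hu⟩
  obtain ⟨M, hM, hMhom⟩ := hg.exists_isHomogeneousMatrix_mul_eq hh' hY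
  exact ⟨M, by rwa [← replicateRow_vecMul, replicateRow_inj] at hM, hMhom⟩

end

variable {τ υ : Type*} {J : Ideal (MvPolynomial τ k)} {K : Ideal (MvPolynomial υ k)}

/-- A graded chain map from `RJ ⊗_f S` to `RI` over the ring map `f`, compatible with the
augmentations. -/
structure ChainMap (f : MvPolynomial τ k →+* MvPolynomial σ k) (RJ : MinFreeRes J)
    (RI : MinFreeRes I) where
  mat : (i : ℕ) → Matrix (Fin (RI.b i)) (Fin (RJ.b i)) (MvPolynomial σ k)
  isHomogeneous : ∀ i, IsHomogeneousMatrix (RI.deg i) (RJ.deg i) (mat i)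
  vecMul_g : RI.g ᵥ* mat 0 = f ∘ RJ.g
  comm : ∀ i, RI.A i * mat (i + 1) = mat i * (RJ.A i).map f

namespace ChainMap

variable {f : MvPolynomial τ k →+* MvPolynomial σ k} {RJ : MinFreeRes J} {RI : MinFreeRes I}

noncomputable def comp {g : MvPolynomial σ k →+* MvPolynomial υ k} {RK : MinFreeRes K}
    (Ψ : ChainMap g RI RK) (Φ : ChainMap f RJ RI) (hg : IsGradedHom g) :
    ChainMap (g.comp f) RJ RK where
  mat i := Ψ.mat i * (Φ.mat i).map g
  isHomogeneous i := (Ψ.isHomogeneous i).mul ((Φ.isHomogeneous i).map hg)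
  vecMul_g := by
    rw [← vecMul_vecMul, Ψ.vecMul_g, comp_vecMul_map, Φ.vecMul_g]
    rfl
  comm i := by
    rw [← Matrix.mul_assoc, Ψ.comm, Matrix.mul_assoc, ← Matrix.map_mul, Φ.comm, Matrix.map_mul,
      Matrix.map_map, ← Matrix.mul_assoc]
    rfl

/-- The graded comparison theorem. -/
theorem nonempty (hf : IsGradedHom f) (hJI : J.map f ≤ I) (RJ : MinFreeRes J)
    (RI : MinFreeRes I) : Nonempty (ChainMap f RJ RI) := by
  let B i := (RJ.A i).map f
  have hB i : B i * B (i + 1) = 0 := by simp [B, ← Matrix.map_mul, RJ.A_mul_A]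
  let P i (M : Matrix (Fin (RI.b i)) (Fin (RJ.b i)) (MvPolynomial σ k)) : Prop :=
    IsHomogeneousMatrix (RI.deg i) (RJ.deg i) M ∧
      ∃ Y : Matrix (Fin (RI.b (i + 1))) (Fin (RJ.b (i + 1))) _, RI.A i * Y = M * B i
  have step i M (hM : P i M) : ∃ M', P (i + 1) M' ∧ RI.A i * M' = M * B i := by
    obtain ⟨M', hM', hM'hom⟩ := (RI.isHomogeneousMatrix_A i).exists_isHomogeneousMatrix_mul_eq
      (hM.1.mul ((RJ.isHomogeneousMatrix_A i).map hf)) hM.2.choose_spec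
    refine ⟨M', ⟨hM'hom, RI.exists_A_succ_mul_eq ?_⟩, hM'⟩
    rw [← Matrix.mul_assoc, hM', Matrix.mul_assoc, hB, Matrix.mul_zero]
  obtain ⟨M₀, hM₀g, hM₀⟩ := RI.exists_vecMul_g_eq (h := f ∘ RJ.g)
    (fun c => hJI (Ideal.mem_map_of_mem f (RJ.g_mem c))) (fun c => hf (RJ.g_hom c))
  have hP₀ : P 0 M₀ := ⟨hM₀, RI.exists_A_zero_mul_eq <| by
    rw [← vecMul_vecMul, hM₀g, comp_vecMul_map, RJ.vecMul_A_zero]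
    exact funext fun _ => map_zero f⟩
  choose next hnext hcomm using step
  let Φ (i : ℕ) : {M // P i M} :=
    Nat.rec ⟨M₀, hP₀⟩ (fun i M => ⟨next i M.1 M.2, hnext i M.1 M.2⟩) i
  exact ⟨⟨fun i => (Φ i).1, fun i => (Φ i).2.1, hM₀g, fun i => hcomm i _ _⟩⟩

section Endomorphism

variable {R : MinFreeRes I} (θ : ChainMap (RingHom.id _) R R)

theorem vecMul_g_id : R.g ᵥ* θ.mat 0 = R.g := θ.vecMul_g

theorem comm_id (i : ℕ) : R.A i * θ.mat (i + 1) = θ.mat i * R.A i := by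
  simpa using θ.comm i

theorem map_constantCoeff_mat_zero : (θ.mat 0).map constantCoeff = 1 := by
  obtain ⟨Y, hY⟩ := R.exists_A_zero_mul_eq (M := θ.mat 0 - 1) <| by
    rw [vecMul_sub, θ.vecMul_g_id, vecMul_one, sub_self]
  have h := congrArg (RingHom.mapMatrix constantCoeff) hY
  rw [map_sub, map_one, RingHom.mapMatrix_apply, RingHom.mapMatrix_apply, Matrix.map_mul,
    R.map_constantCoeff_A, Matrix.zero_mul] at h
  exact sub_eq_zero.mp h.symm

/-- By minimality the kernel of `A i` lies in `𝔪 F_{i+1}`, so a constant vector that `θ` sends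
into `𝔪 F_{i+1}` must vanish. -/
theorem injective_mulVec_map_constantCoeff_succ {i : ℕ} (hθ : IsUnit (θ.mat i).det)
    {Y : Matrix (Fin (R.b (i + 1))) (Fin (R.b (i + 1))) (MvPolynomial σ k)}
    (hY : R.A i * Y = (θ.mat i)⁻¹ * R.A i) :
    Function.Injective ((θ.mat (i + 1)).map constantCoeff).mulVec := by
  refine (injective_iff_map_eq_zero ((θ.mat (i + 1)).map constantCoeff).mulVecLin).mpr
    fun v hv => ?_
  let V : Fin (R.b (i + 1)) → MvPolynomial σ k := C ∘ v
  have hεV : constantCoeff ∘ V = v := funext fun c => constantCoeff_C _ _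
  set w := θ.mat (i + 1) *ᵥ V
  have hεw : constantCoeff ∘ w = 0 := by rw [comp_mulVec_map, hεV]; exact hv
  have hAV : R.A i *ᵥ V = R.A i *ᵥ (Y *ᵥ w) := by
    calc R.A i *ᵥ V = (θ.mat i)⁻¹ *ᵥ (θ.mat i *ᵥ (R.A i *ᵥ V)) := by
          rw [mulVec_mulVec, nonsing_inv_mul _ hθ, one_mulVec]
      _ = R.A i *ᵥ (Y *ᵥ w) := by
          rw [mulVec_mulVec V (θ.mat i), ← θ.comm_id, ← mulVec_mulVec, mulVec_mulVec w, ← hY,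
            ← mulVec_mulVec]
  obtain ⟨u, hu⟩ := R.exists_A_succ_mulVec_eq (v := V - Y *ᵥ w) <| by
    rw [mulVec_sub, hAV, sub_self]
  have hεYw : constantCoeff ∘ (Y *ᵥ w) = 0 := by rw [comp_mulVec_map, hεw, mulVec_zero]
  calc v = constantCoeff ∘ V - constantCoeff ∘ (Y *ᵥ w) := by rw [hεV, hεYw, sub_zero]
    _ = constantCoeff ∘ (R.A (i + 1) *ᵥ u) := by rw [hu]; exact funext fun c => (map_sub _ _ _).symm
    _ = 0 := by rw [comp_mulVec_map, R.map_constantCoeff_A, zero_mulVec]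

theorem isUnit_det_and_exists_A_mul_eq (i : ℕ) : IsUnit (θ.mat i).det ∧
    ∃ Y : Matrix (Fin (R.b (i + 1))) (Fin (R.b (i + 1))) (MvPolynomial σ k),
      R.A i * Y = (θ.mat i)⁻¹ * R.A i := by
  induction i with
  | zero =>
    have hθ : IsUnit (θ.mat 0).det := (θ.isHomogeneous 0).isUnit_det <| by
      rw [map_constantCoeff_mat_zero]
      exact isUnit_one
    refine ⟨hθ, R.exists_A_zero_mul_eq ?_⟩
    have hg : R.g ᵥ* (θ.mat 0)⁻¹ = R.g := by
      conv_lhs => rw [← θ.vecMul_g_id]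
      rw [vecMul_vecMul, mul_nonsing_inv _ hθ, vecMul_one]
    rw [← vecMul_vecMul, hg, R.vecMul_A_zero]
  | succ i ih =>
    obtain ⟨hθ, Y, hY⟩ := ih
    have hθ' : IsUnit (θ.mat (i + 1)).det := (θ.isHomogeneous _).isUnit_det
      (mulVec_injective_iff_isUnit.mp (θ.injective_mulVec_map_constantCoeff_succ hθ hY))
    refine ⟨hθ', R.exists_A_succ_mul_eq ?_⟩
    have hcomm : R.A i * (θ.mat (i + 1))⁻¹ = (θ.mat i)⁻¹ * R.A i := by
      calc R.A i * (θ.mat (i + 1))⁻¹ = (θ.mat i)⁻¹ * (θ.mat i * R.A i) * (θ.mat (i + 1))⁻¹ := by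
            rw [← Matrix.mul_assoc, nonsing_inv_mul _ hθ, Matrix.one_mul]
        _ = (θ.mat i)⁻¹ * R.A i := by
            rw [← θ.comm_id, Matrix.mul_assoc, Matrix.mul_assoc, mul_nonsing_inv _ hθ',
              Matrix.mul_one]
    rw [← Matrix.mul_assoc, hcomm, Matrix.mul_assoc, R.A_mul_A, Matrix.mul_zero]

end Endomorphism

theorem isUnit_map_constantCoeff {R : MinFreeRes I} {f : MvPolynomial σ k →+* MvPolynomial σ k}
    (θ : ChainMap f R R) (hf : f = RingHom.id _) (i : ℕ) :
    IsUnit ((θ.mat i).map constantCoeff) := by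
  subst hf
  cases i with
  | zero => rw [θ.map_constantCoeff_mat_zero]; exact isUnit_one
  | succ i =>
    obtain ⟨hθ, Y, hY⟩ := θ.isUnit_det_and_exists_A_mul_eq i
    exact mulVec_injective_iff_isUnit.mp (θ.injective_mulVec_map_constantCoeff_succ hθ hY)

end ChainMap

theorem card_deg_le_of_retract {ι : MvPolynomial τ k →+* MvPolynomial σ k}
    {π : MvPolynomial σ k →+* MvPolynomial τ k} (hι : IsGradedHom ι) (hπ : IsGradedHom π)
    (hπι : π.comp ι = RingHom.id _) (hJI : J.map ι ≤ I) (hIJ : I.map π ≤ J)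
    (RJ : MinFreeRes J) (RI : MinFreeRes I) (i j : ℕ) :
    Fintype.card {c : Fin (RJ.b i) // RJ.deg i c = j} ≤
      Fintype.card {c : Fin (RI.b i) // RI.deg i c = j} := by
  obtain ⟨Φ⟩ := ChainMap.nonempty hι hJI RJ RI
  obtain ⟨Ψ⟩ := ChainMap.nonempty hπ hIJ RI RJ
  have hunit : IsUnit ((Ψ.mat i).map constantCoeff * ((Φ.mat i).map π).map constantCoeff) := by
    rw [← Matrix.map_mul]
    exact (Ψ.comp Φ hπ).isUnit_map_constantCoeff hπι i
  refine card_fiber_le_of_injective_mulVec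
    (fun r c h => ((Φ.isHomogeneous i).map hπ).eq_of_constantCoeff_ne_zero h) (fun x y h => ?_) j
  refine mulVec_injective_iff_isUnit.mpr hunit ?_
  simp only [← mulVec_mulVec]
  exact congrArg _ h

end MinFreeRes

section LSS

variable (k : Type*) [Field k] {V : Type*} (G : SimpleGraph V) (U : Set V) (d : ℕ)

theorem LSS_induce_map_rename_le :
    (LSS k (G.induce U) d).map (rename (Prod.map ((↑) : U → V) (id : Fin d → Fin d))).toRingHom
      ≤ LSS k G d := by
  unfold LSS
  rw [Ideal.map_span, Ideal.span_le]
  rintro _ ⟨_, ⟨i, j, hij, rfl⟩, rfl⟩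
  exact Ideal.subset_span ⟨i, j, hij, by simp⟩

theorem LSS_map_killCompl_le
    (he : Function.Injective (Prod.map ((↑) : U → V) (id : Fin d → Fin d))) :
    (LSS k G d).map (killCompl he).toRingHom ≤ LSS k (G.induce U) d := by
  classical
  have hX (v : V) (ℓ : Fin d) :
      killCompl he (X (v, ℓ) : MvPolynomial _ k) = if h : v ∈ U then X (⟨v, h⟩, ℓ) else 0 := by
    split_ifs with h
    · simpa using killCompl_rename_app he (X (R := k) (⟨v, h⟩, ℓ))
    · exact killCompl_X_of_notMem he (by simpa using h)
  unfold LSS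
  rw [Ideal.map_span, Ideal.span_le]
  rintro _ ⟨_, ⟨i, j, hij, rfl⟩, rfl⟩
  by_cases hi : i ∈ U
  · by_cases hj : j ∈ U
    · exact Ideal.subset_span ⟨⟨i, hi⟩, ⟨j, hj⟩, hij, by simp [hX, hi, hj]⟩
    · simp [hX, hj]
  · simp [hX, hi]

end LSS

theorem betti_induced_le_general (k : Type*) [Field k] {V : Type*}
    (G : SimpleGraph V) (U : Set V) (d : ℕ)
    (s : ℕ)
    (RH : MinFreeRes ((LSS k (SimpleGraph.induce U G) d) ^ s))
    (RG : MinFreeRes ((LSS k G d) ^ s)) :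
    (∀ i j : ℕ, Fintype.card {c : Fin (RH.b i) // RH.deg i c = j}
        ≤ Fintype.card {c : Fin (RG.b i) // RG.deg i c = j}) ∧
    (∀ r : ℕ, (∀ i c, RG.deg i c ≤ (i + 1) + r) → (∀ i c, RH.deg i c ≤ (i + 1) + r)) := by
  have he : Function.Injective (Prod.map ((↑) : U → V) (id : Fin d → Fin d)) :=
    Subtype.val_injective.prodMap Function.injective_id
  have hcard i j := MinFreeRes.card_deg_le_of_retract (isGradedHom_rename _)
    (isGradedHom_killCompl he) (RingHom.ext (killCompl_rename_app he))
    (Ideal.map_pow_le_pow (LSS_induce_map_rename_le k G U d) s)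
    (Ideal.map_pow_le_pow (LSS_map_killCompl_le k G U d he) s) RH RG i j
  exact ⟨hcard, fun r hr i => Fintype.forall_le_of_card_fiber_le (hcard i) (hr i)⟩

/-- Let `H` be an induced subgraph of `G`.  Then the graded Betti
numbers satisfy `β_{i,j}(S_H/L_H(d)ˢ) ≤ β_{i,j}(S/L_G(d)ˢ)` — for minimal graded
free resolutions, `β_{i+1,j}` is the number of twists equal to `j` in homological
degree `i` of the resolution of the ideal (and `β_{0,0} = 1` for both quotients) —
and in particular `reg(S_H/L_H(d)ˢ) ≤ reg(S/L_G(d)ˢ)`. -/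
theorem betti_induced_le (k : Type*) [Field k] {V : Type*}
    (G : SimpleGraph V) (U : Set V) (d : ℕ)
    (s : ℕ) (hs : 1 ≤ s)
    (RH : MinFreeRes ((LSS k (SimpleGraph.induce U G) d) ^ s))
    (RG : MinFreeRes ((LSS k G d) ^ s)) :
    (∀ i j : ℕ, Fintype.card {c : Fin (RH.b i) // RH.deg i c = j}
        ≤ Fintype.card {c : Fin (RG.b i) // RG.deg i c = j}) ∧
    (∀ r : ℕ, (∀ i c, RG.deg i c ≤ (i + 1) + r) → (∀ i c, RH.deg i c ≤ (i + 1) + r)) :=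
  betti_induced_le_general k G U d s RH RG
end

section
/- Let G be a graph and H an induced subgraph, with the substitution map φ : S → S_H sending x_{ij} ↦ x_{ij} for i ∈ V(H) and x_{ij} ↦ 0 otherwise. Then for every s ≥ 1, L_H(d)ˢ = L_G(d)ˢ ∩ S_H. -/
/-- For an induced subgraph `H = G[U]` and the inclusion of
polynomial rings `φ : S_H → S` (sending `x_{iℓ} ↦ x_{iℓ}` for `i ∈ U`), one has
`L_H(d)ˢ = L_G(d)ˢ ∩ S_H` for every `s ≥ 1`, i.e. `L_H(d)ˢ` is the contraction of
`L_G(d)ˢ` along the inclusion. -/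
theorem LSS_pow_induced (k : Type*) [Field k] {V : Type*}
    (G : SimpleGraph V) (U : Set V) (d : ℕ) (s : ℕ) (hs : 1 ≤ s) :
    (LSS k (SimpleGraph.induce U G) d) ^ s =
      Ideal.comap
        ((MvPolynomial.rename (Prod.map (Subtype.val : U → V) (id : Fin d → Fin d))
          : MvPolynomial (↥U × Fin d) k →ₐ[k] MvPolynomial (V × Fin d) k)).toRingHom
        ((LSS k G d) ^ s) := by
  classical
  set φ : MvPolynomial (↥U × Fin d) k →ₐ[k] MvPolynomial (V × Fin d) k :=
    MvPolynomial.rename (Prod.map (Subtype.val : U → V) (id : Fin d → Fin d)) with hφ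
  set ψ : MvPolynomial (V × Fin d) k →ₐ[k] MvPolynomial (↥U × Fin d) k :=
    MvPolynomial.aeval (fun p : V × Fin d =>
      if h : p.1 ∈ U then MvPolynomial.X (⟨p.1, h⟩, p.2) else 0) with hψ
  have hψφ : ∀ f, ψ (φ f) = f := by
    intro f
    rw [hφ, hψ]
    simp only [MvPolynomial.aeval_rename]
    have : ((fun p : V × Fin d =>
        if h : p.1 ∈ U then (MvPolynomial.X (⟨p.1, h⟩, p.2) : MvPolynomial (↥U × Fin d) k)
        else 0) ∘ Prod.map (Subtype.val : U → V) (id : Fin d → Fin d)) = MvPolynomial.X := by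
      funext p
      simp [Prod.map]
    rw [this, MvPolynomial.aeval_X_left, AlgHom.id_apply]
  have hmapφ : Ideal.map φ.toRingHom (LSS k (SimpleGraph.induce U G) d) ≤ LSS k G d := by
    rw [LSS, Ideal.map_span, Ideal.span_le]
    rintro _ ⟨f, ⟨i, j, hadj, rfl⟩, rfl⟩
    apply Ideal.subset_span
    refine ⟨i.1, j.1, hadj, ?_⟩
    simp [hφ, Prod.map]
  have hmapψ : Ideal.map ψ.toRingHom (LSS k G d) ≤ LSS k (SimpleGraph.induce U G) d := by
    rw [LSS, Ideal.map_span, Ideal.span_le]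
    rintro _ ⟨f, ⟨i, j, hadj, rfl⟩, rfl⟩
    simp only [AlgHom.toRingHom_eq_coe, RingHom.coe_coe, map_sum, map_mul, SetLike.mem_coe]
    by_cases hi : i ∈ U
    · by_cases hj : j ∈ U
      · apply Ideal.subset_span
        refine ⟨⟨i, hi⟩, ⟨j, hj⟩, hadj, ?_⟩
        simp [hψ, hi, hj]
      · convert Ideal.zero_mem _ using 1
        apply Finset.sum_eq_zero
        intro ℓ _
        simp [hψ, hj]
    · convert Ideal.zero_mem _ using 1
      apply Finset.sum_eq_zero
      intro ℓ _
      simp [hψ, hi]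
  ext f
  simp only [Ideal.mem_comap]
  constructor
  · intro hf
    have : φ.toRingHom f ∈ Ideal.map φ.toRingHom ((LSS k (SimpleGraph.induce U G) d) ^ s) :=
      Ideal.mem_map_of_mem _ hf
    rw [Ideal.map_pow] at this
    exact Ideal.pow_right_mono hmapφ s this
  · intro hf
    have : ψ.toRingHom (φ.toRingHom f) ∈ Ideal.map ψ.toRingHom ((LSS k G d) ^ s) :=
      Ideal.mem_map_of_mem _ hf
    rw [Ideal.map_pow] at this
    have h2 := Ideal.pow_right_mono hmapψ s this
    simpa [hψφ f] using h2
end
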